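/- arXiv:1412.5492 — 7 statements merged into one kernel-verified Lean document; each statement's English description precedes it below -/
import Mathlib

section
/- Let 0 < λ_min ≤ λ_max < ∞ and let T : ℝⁿ → ℝⁿ be everywhere differentiable and bi-Lipschitz with constants λ_min, λ_max. Let g₁, g₂ be isotropic centered Gaussian densities on ℝⁿ, let k₁, k₂ > 0, and let q_r : ℝⁿ × ℝⁿ → (0,∞) satisfy k₁ g₁(r′ − r) ≤ q_r(r′ | r) ≤ k₂ g₂(r′ − r) for all r, r′. Define the map-induced proposal density q_θ(θ′ | θ) = q_r(T(θ′) | T(θ)) · |det DT(θ′)|. Then for all θ, θ′ ∈ ℝⁿ: k₁ λ_minⁿ · g₁(λ_max (θ′ − θ)) ≤ q_θ(θ′ | θ) ≤ k₂ λ_maxⁿ · g₂(λ_min (θ′ − θ)). -/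
open MeasureTheory Metric Set

/-- An isotropic centered Gaussian density on ℝⁿ:
`g(x) = (2πσ²)^(−n/2) exp(−‖x‖²/(2σ²))` for some `σ > 0`. -/
def IsIsotropicGaussian (n : ℕ) (g : EuclideanSpace ℝ (Fin n) → ℝ) : Prop :=
  ∃ σ : ℝ, 0 < σ ∧ ∀ x : EuclideanSpace ℝ (Fin n),
    g x = (2 * Real.pi * σ ^ 2) ^ (-(n : ℝ) / 2) * Real.exp (-(‖x‖ ^ 2) / (2 * σ ^ 2))

lemma gauss_pos {n : ℕ} {g : EuclideanSpace ℝ (Fin n) → ℝ}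
    (hg : IsIsotropicGaussian n g) (x : EuclideanSpace ℝ (Fin n)) : 0 < g x := by
  obtain ⟨σ, hσ, hgx⟩ := hg
  rw [hgx x]
  have hC : (0:ℝ) < (2 * Real.pi * σ ^ 2) ^ (-(n : ℝ) / 2) :=
    Real.rpow_pos_of_pos (by positivity) _
  positivity

lemma gauss_mono {n : ℕ} {g : EuclideanSpace ℝ (Fin n) → ℝ}
    (hg : IsIsotropicGaussian n g)
    {a b : EuclideanSpace ℝ (Fin n)} (h : ‖a‖ ≤ ‖b‖) : g b ≤ g a := by
  obtain ⟨σ, hσ, hgx⟩ := hg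
  rw [hgx a, hgx b]
  have hC : (0:ℝ) < (2 * Real.pi * σ ^ 2) ^ (-(n : ℝ) / 2) :=
    Real.rpow_pos_of_pos (by positivity) _
  apply mul_le_mul_of_nonneg_left _ hC.le
  apply Real.exp_le_exp.mpr
  apply div_le_div_of_nonneg_right ?_ (by positivity)
  · exact neg_le_neg (pow_le_pow_left₀ (norm_nonneg a) h 2)

lemma det_bounds {n : ℕ} (A : EuclideanSpace ℝ (Fin n) →L[ℝ] EuclideanSpace ℝ (Fin n))
    {lmin lmax : ℝ} (hlmin : 0 < lmin) (hle : lmin ≤ lmax)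
    (h : ∀ v, lmin * ‖v‖ ≤ ‖A v‖ ∧ ‖A v‖ ≤ lmax * ‖v‖) :
    lmin ^ n ≤ |A.det| ∧ |A.det| ≤ lmax ^ n := by
  have hlmax : (0:ℝ) ≤ lmax := hlmin.le.trans hle
  set E := EuclideanSpace ℝ (Fin n)
  have hfr : Module.finrank ℝ E = n := finrank_euclideanSpace_fin
  set μ : Measure E := volume
  have hc0 : μ (ball (0:E) 1) ≠ 0 := (measure_ball_pos μ 0 one_pos).ne'
  have hct : μ (ball (0:E) 1) ≠ ⊤ := measure_ball_lt_top.ne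
  -- A is injective, hence surjective
  have hinj : Function.Injective A := by
    intro x y hxy
    have := (h (x - y)).1
    rw [map_sub, hxy, sub_self, norm_zero] at this
    have hz : ‖x - y‖ = 0 := le_antisymm (by nlinarith [norm_nonneg (x - y)]) (norm_nonneg _)
    exact sub_eq_zero.mp (norm_eq_zero.mp hz)
  have hsurj : Function.Surjective A :=
    LinearMap.surjective_of_injective (f := (A : E →ₗ[ℝ] E)) hinj
  -- image inclusions
  have hsub : A '' closedBall (0:E) 1 ⊆ closedBall 0 lmax := by
    rintro _ ⟨x, hx, rfl⟩
    simp only [mem_closedBall, dist_zero_right] at hx ⊢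
    exact (h x).2.trans (by nlinarith [norm_nonneg x])
  have hsup : closedBall (0:E) lmin ⊆ A '' closedBall 0 1 := by
    intro y hy
    obtain ⟨x, rfl⟩ := hsurj y
    simp only [mem_closedBall, dist_zero_right] at hy
    refine ⟨x, ?_, rfl⟩
    simp only [mem_closedBall, dist_zero_right]
    have := (h x).1
    nlinarith
  have himg : μ (A '' closedBall 0 1) = ENNReal.ofReal |A.det| * μ (closedBall 0 1) :=
    Measure.addHaar_image_continuousLinearMap μ A _
  have h1 : μ (closedBall (0:E) 1) = ENNReal.ofReal ((1:ℝ) ^ n) * μ (ball 0 1) := by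
    rw [Measure.addHaar_closedBall μ _ zero_le_one, hfr]
  have hmin : μ (closedBall (0:E) lmin) = ENNReal.ofReal (lmin ^ n) * μ (ball 0 1) := by
    rw [Measure.addHaar_closedBall μ _ hlmin.le, hfr]
  have hmax : μ (closedBall (0:E) lmax) = ENNReal.ofReal (lmax ^ n) * μ (ball 0 1) := by
    rw [Measure.addHaar_closedBall μ _ hlmax, hfr]
  rw [h1, one_pow, ENNReal.ofReal_one, one_mul] at himg
  constructor
  · have : μ (closedBall (0:E) lmin) ≤ μ (A '' closedBall 0 1) := measure_mono hsup
    rw [himg, hmin] at this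
    have := (ENNReal.mul_le_mul_iff_left hc0 hct).mp this
    have := (ENNReal.ofReal_le_ofReal_iff (abs_nonneg _)).mp this
    exact this
  · have : μ (A '' closedBall 0 1) ≤ μ (closedBall (0:E) lmax) := measure_mono hsub
    rw [himg, hmax] at this
    have := (ENNReal.mul_le_mul_iff_left hc0 hct).mp this
    exact (ENNReal.ofReal_le_ofReal_iff (by positivity)).mp this

lemma deriv_bounds {n : ℕ} {lmin lmax : ℝ}
    {T : EuclideanSpace ℝ (Fin n) → EuclideanSpace ℝ (Fin n)}
    {A : EuclideanSpace ℝ (Fin n) →L[ℝ] EuclideanSpace ℝ (Fin n)}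
    {θ : EuclideanSpace ℝ (Fin n)} (hd : HasFDerivAt T A θ)
    (hbi : ∀ x y : EuclideanSpace ℝ (Fin n),
      lmin * ‖x - y‖ ≤ ‖T x - T y‖ ∧ ‖T x - T y‖ ≤ lmax * ‖x - y‖)
    (v : EuclideanSpace ℝ (Fin n)) :
    lmin * ‖v‖ ≤ ‖A v‖ ∧ ‖A v‖ ≤ lmax * ‖v‖ := by
  set φ : ℝ → EuclideanSpace ℝ (Fin n) := fun t => T (θ + t • v) with hφ
  have hline : HasDerivAt (fun t : ℝ => θ + t • v) v 0 := by
    simpa using ((hasDerivAt_id (0:ℝ)).smul_const v).const_add θ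
  have hd' : HasFDerivAt T A ((fun t : ℝ => θ + t • v) 0) := by simpa using hd
  have hφd : HasDerivAt φ (A v) 0 := hd'.comp_hasDerivAt 0 hline
  have hten : Filter.Tendsto (fun t => ‖slope φ 0 t‖) (nhdsWithin 0 {(0:ℝ)}ᶜ) (nhds ‖A v‖) :=
    ((hasDerivAt_iff_tendsto_slope.mp hφd).norm)
  have hkey : ∀ t : ℝ, t ≠ 0 →
      lmin * ‖v‖ ≤ ‖slope φ 0 t‖ ∧ ‖slope φ 0 t‖ ≤ lmax * ‖v‖ := by
    intro t ht
    have : slope φ 0 t = (t:ℝ)⁻¹ • (φ t - φ 0) := by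
      rw [slope_def_module]; simp
    rw [this, norm_smul]
    have hφ0 : φ 0 = T θ := by simp [hφ]
    have h1 := hbi (θ + t • v) θ
    have hnorm : ‖θ + t • v - θ‖ = |t| * ‖v‖ := by
      rw [add_sub_cancel_left, norm_smul, Real.norm_eq_abs]
    rw [hnorm] at h1
    have habs : ‖(t:ℝ)⁻¹‖ = |t|⁻¹ := by rw [Real.norm_eq_abs, abs_inv]
    have htpos : 0 < |t| := abs_pos.mpr ht
    constructor
    · calc lmin * ‖v‖ = |t|⁻¹ * (lmin * (|t| * ‖v‖)) := by
            field_simp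
        _ ≤ |t|⁻¹ * ‖φ t - φ 0‖ := by
            apply mul_le_mul_of_nonneg_left _ (by positivity)
            rw [hφ0]; exact h1.1
        _ = ‖(t:ℝ)⁻¹‖ * ‖φ t - φ 0‖ := by rw [habs]
    · calc ‖(t:ℝ)⁻¹‖ * ‖φ t - φ 0‖ = |t|⁻¹ * ‖φ t - φ 0‖ := by rw [habs]
        _ ≤ |t|⁻¹ * (lmax * (|t| * ‖v‖)) := by
            apply mul_le_mul_of_nonneg_left _ (by positivity)
            rw [hφ0]; exact h1.2
        _ = lmax * ‖v‖ := by field_simp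
  constructor
  · refine ge_of_tendsto hten ?_
    filter_upwards [self_mem_nhdsWithin] with t ht
    exact (hkey t ht).1
  · refine le_of_tendsto hten ?_
    filter_upwards [self_mem_nhdsWithin] with t ht
    exact (hkey t ht).2

/-- Gaussian bounds on the reference proposal transfer to the
map-induced target-space proposal `q_θ(θ′|θ) = q_r(T θ′ | T θ)·|det DT(θ′)|`,
when `T` is everywhere differentiable and bi-Lipschitz with constants
`0 < λ_min ≤ λ_max`. -/
theorem stmt_1 (n : ℕ) (lmin lmax : ℝ) (hlmin : 0 < lmin) (hle : lmin ≤ lmax)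
    (T : EuclideanSpace ℝ (Fin n) → EuclideanSpace ℝ (Fin n))
    (DT : EuclideanSpace ℝ (Fin n) → EuclideanSpace ℝ (Fin n) →L[ℝ] EuclideanSpace ℝ (Fin n))
    (hdiff : ∀ θ, HasFDerivAt T (DT θ) θ)
    (hbi : ∀ x y : EuclideanSpace ℝ (Fin n),
      lmin * ‖x - y‖ ≤ ‖T x - T y‖ ∧ ‖T x - T y‖ ≤ lmax * ‖x - y‖)
    (g1 g2 : EuclideanSpace ℝ (Fin n) → ℝ)
    (hg1 : IsIsotropicGaussian n g1) (hg2 : IsIsotropicGaussian n g2)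
    (k1 k2 : ℝ) (hk1 : 0 < k1) (hk2 : 0 < k2)
    (qr : EuclideanSpace ℝ (Fin n) → EuclideanSpace ℝ (Fin n) → ℝ)
    (hqrpos : ∀ r' r, 0 < qr r' r)
    (hqr : ∀ r' r : EuclideanSpace ℝ (Fin n),
      k1 * g1 (r' - r) ≤ qr r' r ∧ qr r' r ≤ k2 * g2 (r' - r))
    (qθ : EuclideanSpace ℝ (Fin n) → EuclideanSpace ℝ (Fin n) → ℝ)
    (hqθ : ∀ θ' θ, qθ θ' θ = qr (T θ') (T θ) * |(DT θ').det|) :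
    ∀ θ θ' : EuclideanSpace ℝ (Fin n),
      k1 * lmin ^ n * g1 (lmax • (θ' - θ)) ≤ qθ θ' θ ∧
      qθ θ' θ ≤ k2 * lmax ^ n * g2 (lmin • (θ' - θ)) := by
  intro θ θ'
  have hdet := det_bounds (DT θ') hlmin hle (deriv_bounds (hdiff θ') hbi)
  have hbi' := hbi θ' θ
  rw [hqθ θ' θ]
  have hg1pos := gauss_pos hg1
  have hg2pos := gauss_pos hg2
  have hqr' := hqr (T θ') (T θ)
  have hdet0 : (0:ℝ) ≤ |(DT θ').det| := abs_nonneg _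
  constructor
  · have hmono : g1 (lmax • (θ' - θ)) ≤ g1 (T θ' - T θ) := by
      apply gauss_mono hg1
      rw [norm_smul, Real.norm_eq_abs, abs_of_nonneg (hlmin.le.trans hle)]
      exact hbi'.2
    calc k1 * lmin ^ n * g1 (lmax • (θ' - θ))
        ≤ (k1 * g1 (T θ' - T θ)) * lmin ^ n := by
          have : k1 * g1 (lmax • (θ' - θ)) ≤ k1 * g1 (T θ' - T θ) :=
            mul_le_mul_of_nonneg_left hmono hk1.le
          nlinarith [pow_pos hlmin n, (hg1pos (lmax • (θ' - θ)))]
      _ ≤ qr (T θ') (T θ) * |(DT θ').det| := by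
          apply mul_le_mul hqr'.1 hdet.1 (by positivity)
          exact (hqrpos _ _).le
  · have hmono : g2 (T θ' - T θ) ≤ g2 (lmin • (θ' - θ)) := by
      apply gauss_mono hg2
      rw [norm_smul, Real.norm_eq_abs, abs_of_nonneg hlmin.le]
      exact hbi'.1
    calc qr (T θ') (T θ) * |(DT θ').det|
        ≤ (k2 * g2 (T θ' - T θ)) * lmax ^ n := by
          exact mul_le_mul hqr'.2 hdet.2 hdet0 (mul_nonneg hk2.le (hg2pos _).le)
      _ ≤ k2 * lmax ^ n * g2 (lmin • (θ' - θ)) := by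
          have : k2 * g2 (T θ' - T θ) ≤ k2 * g2 (lmin • (θ' - θ)) :=
            mul_le_mul_of_nonneg_left hmono hk2.le
          nlinarith [pow_pos (hlmin.trans_le hle) n, hg2pos (T θ' - T θ)]
end

section
/- Let Σ be a symmetric positive definite n×n real matrix, let M < ∞, and let m : ℝⁿ → ℝⁿ be a function with ‖m(r)‖ ≤ M for all r. Define q(r′ | r) = (2π)^{−n/2} (det Σ)^{−1/2} exp(−½ (r′ − r − m(r))ᵀ Σ⁻¹ (r′ − r − m(r))), the density of a Gaussian random-walk proposal with bounded drift. Then there exist constants 0 < k₁ ≤ k₂ < ∞ and isotropic centered Gaussian densities g₁, g₂ on ℝⁿ such that k₁ g₁(r′ − r) ≤ q(r′ | r) ≤ k₂ g₂(r′ − r) for all r, r′ ∈ ℝⁿ. -/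
open MeasureTheory

open Metric

variable {n : ℕ}

lemma aux_inner_pos (A : Matrix (Fin n) (Fin n) ℝ) (hA : A.PosDef)
    (x : EuclideanSpace ℝ (Fin n)) (hx : x ≠ 0) :
    (0:ℝ) < inner ℝ x (Matrix.toEuclideanLin A x) := by
  have hx' : (WithLp.equiv 2 (Fin n → ℝ)) x ≠ 0 := by simpa using hx
  have := hA.dotProduct_mulVec_pos hx'
  rw [EuclideanSpace.inner_eq_star_dotProduct, dotProduct_comm]; exact this

lemma aux_coercive (A : Matrix (Fin n) (Fin n) ℝ) (hA : A.PosDef) :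
    ∃ a : ℝ, 0 < a ∧ ∀ x : EuclideanSpace ℝ (Fin n),
      a * ‖x‖ ^ 2 ≤ inner ℝ x (Matrix.toEuclideanLin A x) := by
  set T : EuclideanSpace ℝ (Fin n) →L[ℝ] EuclideanSpace ℝ (Fin n) :=
    LinearMap.toContinuousLinearMap (Matrix.toEuclideanLin A) with hT
  have hTa : ∀ x, T x = Matrix.toEuclideanLin A x := fun x => rfl
  have hcont : Continuous fun x : EuclideanSpace ℝ (Fin n) =>
      (inner ℝ x (Matrix.toEuclideanLin A x) : ℝ) := by
    simp only [← hTa]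
    exact continuous_id.inner T.continuous
  rcases subsingleton_or_nontrivial (EuclideanSpace ℝ (Fin n)) with h | h
  · exact ⟨1, one_pos, fun x => by
      rw [Subsingleton.elim x 0]; simp⟩
  · have hne : (sphere (0 : EuclideanSpace ℝ (Fin n)) 1).Nonempty :=
      NormedSpace.sphere_nonempty.mpr zero_le_one
    obtain ⟨x₀, hx₀, hmin⟩ := (isCompact_sphere (0 : EuclideanSpace ℝ (Fin n)) 1).exists_isMinOn
      hne hcont.continuousOn
    have hx₀n : ‖x₀‖ = 1 := by simpa using hx₀
    have hx₀0 : x₀ ≠ 0 := by intro h0; rw [h0] at hx₀n; simp at hx₀n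
    refine ⟨_, aux_inner_pos A hA x₀ hx₀0, fun x => ?_⟩
    rcases eq_or_ne x 0 with rfl | hx
    · simp
    · have hxn : (0:ℝ) < ‖x‖ := norm_pos_iff.mpr hx
      set u : EuclideanSpace ℝ (Fin n) := ‖x‖⁻¹ • x with hu
      have hus : u ∈ sphere (0 : EuclideanSpace ℝ (Fin n)) 1 := by
        simp [hu, norm_smul, abs_of_pos (inv_pos.mpr hxn), inv_mul_cancel₀ hxn.ne']
      have h1 := hmin hus
      simp only [Set.mem_setOf_eq] at h1
      have h2 : (inner ℝ u (Matrix.toEuclideanLin A u) : ℝ)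
          = ‖x‖⁻¹ ^ 2 * inner ℝ x (Matrix.toEuclideanLin A x) := by
        rw [hu, _root_.map_smul, real_inner_smul_left, real_inner_smul_right]; ring
      have h3 : (inner ℝ x (Matrix.toEuclideanLin A x) : ℝ)
          = ‖x‖ ^ 2 * inner ℝ u (Matrix.toEuclideanLin A u) := by
        rw [h2]; field_simp
      rw [h3, mul_comm]
      exact mul_le_mul_of_nonneg_left h1 (sq_nonneg _)

lemma cancel_aux (N c w : ℝ) (hN : N ≠ 0) :
    (c / N) * (N * Real.exp w) = c * Real.exp w := by
  field_simp


lemma lower_ineq (b M' ny nz Q : ℝ) (hb : 0 < b) (hny : 0 ≤ ny) (hnz : 0 ≤ nz)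
    (h : nz ≤ ny + M') (hM : 0 ≤ M') (hQ : Q ≤ b * nz ^ 2) :
    -(b * M' ^ 2) + -(b * ny ^ 2) ≤ -(1 / 2) * Q := by
  nlinarith [mul_nonneg hb.le (sq_nonneg (ny - M')), sq_nonneg (nz - ny - M'),
    mul_le_mul_of_nonneg_left (sq_le_sq' (by linarith) h) hb.le]

lemma upper_ineq (a M' ny nz Q : ℝ) (ha : 0 < a) (hny : 0 ≤ ny) (hnz : 0 ≤ nz)
    (h : ny ≤ nz + M') (hM : 0 ≤ M') (hQ : a * nz ^ 2 ≤ Q) :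
    -(1 / 2) * Q ≤ a * M' ^ 2 / 2 + -(a * ny ^ 2 / 4) := by
  nlinarith [mul_nonneg ha.le (sq_nonneg (nz - M')),
    mul_le_mul_of_nonneg_left (sq_le_sq' (by linarith) h) ha.le]


set_option maxHeartbeats 1000000

/-- A Gaussian random-walk proposal with covariance `Σ` (symmetric
positive definite) and bounded drift `m` is bounded above and below by multiples of
isotropic centered Gaussian densities. -/
theorem stmt_2 (n : ℕ) (S : Matrix (Fin n) (Fin n) ℝ) (hS : S.PosDef)
    (M : ℝ) (m : EuclideanSpace ℝ (Fin n) → EuclideanSpace ℝ (Fin n))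
    (hm : ∀ r, ‖m r‖ ≤ M)
    (q : EuclideanSpace ℝ (Fin n) → EuclideanSpace ℝ (Fin n) → ℝ)
    (hq : ∀ r' r : EuclideanSpace ℝ (Fin n),
      q r' r = (2 * Real.pi) ^ (-(n : ℝ) / 2) * S.det ^ (-(1 : ℝ) / 2) *
        Real.exp (-(1 / 2) *
          (inner ℝ (r' - r - m r) (Matrix.toEuclideanLin S⁻¹ (r' - r - m r)) : ℝ))) :
    ∃ (k1 k2 : ℝ) (g1 g2 : EuclideanSpace ℝ (Fin n) → ℝ),
      0 < k1 ∧ k1 ≤ k2 ∧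
      IsIsotropicGaussian n g1 ∧ IsIsotropicGaussian n g2 ∧
      ∀ r' r : EuclideanSpace ℝ (Fin n),
        k1 * g1 (r' - r) ≤ q r' r ∧ q r' r ≤ k2 * g2 (r' - r) := by
  obtain ⟨a, ha, hlow⟩ := aux_coercive S⁻¹ hS.inv
  obtain ⟨b, hb, hab, hup⟩ : ∃ b : ℝ, 0 < b ∧ a ≤ b ∧
      ∀ x : EuclideanSpace ℝ (Fin n),
        (inner ℝ x (Matrix.toEuclideanLin S⁻¹ x) : ℝ) ≤ b * ‖x‖ ^ 2 := by
    set T : EuclideanSpace ℝ (Fin n) →L[ℝ] EuclideanSpace ℝ (Fin n) :=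
      LinearMap.toContinuousLinearMap (Matrix.toEuclideanLin S⁻¹) with hT
    refine ⟨‖T‖ + a, by positivity, by linarith [norm_nonneg T], fun x => ?_⟩
    have h1 : (inner ℝ x (Matrix.toEuclideanLin S⁻¹ x) : ℝ) = inner ℝ x (T x) := rfl
    calc (inner ℝ x (Matrix.toEuclideanLin S⁻¹ x) : ℝ) ≤ ‖x‖ * ‖T x‖ := by
          rw [h1]; exact real_inner_le_norm _ _
      _ ≤ ‖x‖ * (‖T‖ * ‖x‖) :=
          mul_le_mul_of_nonneg_left (T.le_opNorm x) (norm_nonneg x)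
      _ ≤ (‖T‖ + a) * ‖x‖ ^ 2 := by nlinarith [norm_nonneg x, sq_nonneg ‖x‖]
  set M' : ℝ := max M 0 with hM'
  have hM0 : 0 ≤ M' := le_max_right _ _
  have hmM : ∀ r, ‖m r‖ ≤ M' := fun r => (hm r).trans (le_max_left _ _)
  have hπ : (0:ℝ) < 2 * Real.pi := by positivity
  set v1 : ℝ := 1 / (2 * b) with hv1
  set v2 : ℝ := 2 / a with hv2
  have hv1p : 0 < v1 := by positivity
  have hv2p : 0 < v2 := by positivity
  set C : ℝ := (2 * Real.pi) ^ (-(n : ℝ) / 2) * S.det ^ (-(1 : ℝ) / 2) with hC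
  have hCp : 0 < C := mul_pos (Real.rpow_pos_of_pos hπ _)
    (Real.rpow_pos_of_pos hS.det_pos _)
  set N1 : ℝ := (2 * Real.pi * v1) ^ (-(n : ℝ) / 2) with hN1
  set N2 : ℝ := (2 * Real.pi * v2) ^ (-(n : ℝ) / 2) with hN2
  have hN1p : 0 < N1 := Real.rpow_pos_of_pos (by positivity) _
  have hN2p : 0 < N2 := Real.rpow_pos_of_pos (by positivity) _
  set g1 : EuclideanSpace ℝ (Fin n) → ℝ :=
    fun x => N1 * Real.exp (-(‖x‖ ^ 2) / (2 * v1)) with hg1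
  set g2 : EuclideanSpace ℝ (Fin n) → ℝ :=
    fun x => N2 * Real.exp (-(‖x‖ ^ 2) / (2 * v2)) with hg2
  set k1 : ℝ := C * Real.exp (-(b * M' ^ 2)) / N1 with hk1
  set k2' : ℝ := C * Real.exp (a * M' ^ 2 / 2) / N2 with hk2'
  have hk1p : 0 < k1 := by positivity
  have hk2p : 0 < k2' := by positivity
  refine ⟨k1, max k1 k2', g1, g2, hk1p, le_max_left _ _, ?_, ?_, ?_⟩
  · refine ⟨Real.sqrt v1, Real.sqrt_pos.mpr hv1p, fun x => ?_⟩
    rw [hg1, Real.sq_sqrt hv1p.le]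
  · refine ⟨Real.sqrt v2, Real.sqrt_pos.mpr hv2p, fun x => ?_⟩
    rw [hg2, Real.sq_sqrt hv2p.le]
  · intro r' r
    set y : EuclideanSpace ℝ (Fin n) := r' - r with hy
    set z : EuclideanSpace ℝ (Fin n) := r' - r - m r with hz
    have hzy : z = y - m r := by rw [hz, hy]
    set Q : ℝ := inner ℝ z (Matrix.toEuclideanLin S⁻¹ z) with hQ
    have hqf : q r' r = C * Real.exp (-(1 / 2) * Q) := hq r' r
    have hnz : ‖z‖ ≤ ‖y‖ + M' := by
      rw [hzy]; exact (norm_sub_le _ _).trans (by linarith [hmM r])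
    have hny : ‖y‖ ≤ ‖z‖ + M' := by
      have : y = z + m r := by rw [hzy]; abel
      rw [this]; exact (norm_add_le _ _).trans (by linarith [hmM r])
    have hQlow : a * ‖z‖ ^ 2 ≤ Q := hlow z
    have hQup : Q ≤ b * ‖z‖ ^ 2 := hup z
    constructor
    · -- lower bound
      have hexp : -(b * M' ^ 2) + -(‖y‖ ^ 2) / (2 * v1) ≤ -(1 / 2) * Q := by
        have h2v1 : 2 * v1 = 1 / b := by rw [hv1]; field_simp
        rw [h2v1]
        have h1 : -(‖y‖ ^ 2) / (1 / b) = -(b * ‖y‖ ^ 2) := by field_simp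
        rw [h1]
        exact lower_ineq b M' ‖y‖ ‖z‖ Q hb (norm_nonneg y) (norm_nonneg z) hnz hM0 hQup
      calc k1 * g1 y
          = (C * Real.exp (-(b * M' ^ 2)) / N1) *
            (N1 * Real.exp (-(‖y‖ ^ 2) / (2 * v1))) := by simp only [hk1, hg1]
        _ = C * Real.exp (-(b * M' ^ 2)) * Real.exp (-(‖y‖ ^ 2) / (2 * v1)) :=
            cancel_aux _ _ _ hN1p.ne'
        _ = C * Real.exp (-(b * M' ^ 2) + -(‖y‖ ^ 2) / (2 * v1)) := by
            rw [Real.exp_add]; ring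
        _ ≤ C * Real.exp (-(1 / 2) * Q) :=
            mul_le_mul_of_nonneg_left (Real.exp_le_exp.mpr hexp) hCp.le
        _ = q r' r := hqf.symm
    · -- upper bound
      have hexp : -(1 / 2) * Q ≤ a * M' ^ 2 / 2 + -(‖y‖ ^ 2) / (2 * v2) := by
        have h2v2 : 2 * v2 = 4 / a := by rw [hv2]; field_simp; ring
        rw [h2v2]
        have h1 : -(‖y‖ ^ 2) / (4 / a) = -(a * ‖y‖ ^ 2 / 4) := by field_simp
        rw [h1]
        exact upper_ineq a M' ‖y‖ ‖z‖ Q ha (norm_nonneg y) (norm_nonneg z) hny hM0 hQlow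
      have step1 : q r' r ≤ k2' * g2 y := by
        calc q r' r = C * Real.exp (-(1 / 2) * Q) := hqf
          _ ≤ C * Real.exp (a * M' ^ 2 / 2 + -(‖y‖ ^ 2) / (2 * v2)) :=
              mul_le_mul_of_nonneg_left (Real.exp_le_exp.mpr hexp) hCp.le
          _ = C * Real.exp (a * M' ^ 2 / 2) * Real.exp (-(‖y‖ ^ 2) / (2 * v2)) := by
              rw [Real.exp_add]; ring
          _ = (C * Real.exp (a * M' ^ 2 / 2) / N2) *
              (N2 * Real.exp (-(‖y‖ ^ 2) / (2 * v2))) :=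
              (cancel_aux _ _ _ hN2p.ne').symm
          _ = k2' * g2 y := by simp only [hk2', hg2]
      have hg2nn : 0 ≤ g2 y := mul_nonneg hN2p.le (Real.exp_pos _).le
      exact step1.trans (mul_le_mul_of_nonneg_right (le_max_right _ _) hg2nn)
end

section
/- Let T : ℝⁿ → ℝⁿ be a C¹ diffeomorphism, let π be a strictly positive probability density on ℝⁿ, let p be a strictly positive probability density on ℝⁿ, and set π̃(θ) = p(T(θ)) · |det DT(θ)|. Suppose there is a constant c ∈ ℝ such that log π(θ) − log π̃(θ) = c for Lebesgue-almost every θ (equivalently, the variance diagnostic σ²_M = Var_π[log π − log p∘T − log|det DT|] vanishes). Then c = 0 and π(θ) = π̃(θ) for Lebesgue-almost every θ; consequently the pushforward under T of the measure with density π is the measure with density p, i.e., the transport map is exact. -/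
open MeasureTheory

lemma map_withDensity_comp {α β : Type*} [MeasurableSpace α] [MeasurableSpace β]
    (μ : Measure α) {f : α → β} (hf : Measurable f) {g : β → ENNReal} (hg : Measurable g) :
    (μ.withDensity (g ∘ f)).map f = (μ.map f).withDensity g := by
  apply Measure.ext fun t ht => ?_
  rw [Measure.map_apply hf ht, withDensity_apply _ (hf ht), withDensity_apply _ ht,
    setLIntegral_map ht hg hf]
  rfl

/-- If the Kullback–Leibler integrand
`log π(θ) − log π̃(θ)`, where `π̃(θ) = p(T θ)·|det DT(θ)|`, is Lebesgue-a.e. equal to a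
constant `c` (i.e., the variance diagnostic `σ²_M` vanishes), then `c = 0`,
`π = π̃` a.e., and `T` pushes the measure with density `π` forward to the measure with
density `p`: the transport map is exact. -/
theorem stmt_7 (n : ℕ)
    (T S : EuclideanSpace ℝ (Fin n) → EuclideanSpace ℝ (Fin n))
    (hT : ContDiff ℝ 1 T) (hS : ContDiff ℝ 1 S)
    (hTS : Function.LeftInverse S T) (hST : Function.RightInverse S T)
    (π p : EuclideanSpace ℝ (Fin n) → ℝ)
    (hπ0 : ∀ x, 0 < π x) (hπ1 : ∫ x, π x = 1)
    (hp0 : ∀ x, 0 < p x) (hp1 : ∫ x, p x = 1)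
    (c : ℝ)
    (hc : ∀ᵐ θ : EuclideanSpace ℝ (Fin n) ∂volume,
      Real.log (π θ) - Real.log (p (T θ) * |(fderiv ℝ T θ).det|) = c) :
    c = 0 ∧
    (∀ᵐ θ : EuclideanSpace ℝ (Fin n) ∂volume,
      π θ = p (T θ) * |(fderiv ℝ T θ).det|) ∧
    (volume.withDensity (fun θ => ENNReal.ofReal (π θ))).map T
      = volume.withDensity (fun x => ENNReal.ofReal (p x)) := by
  have hTd : ∀ θ, DifferentiableAt ℝ T θ := fun θ => (hT.differentiable one_ne_zero θ)
  -- determinant is nonzero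
  have hdet : ∀ θ, (fderiv ℝ T θ).det ≠ 0 := by
    intro θ
    have hcomp : fderiv ℝ (S ∘ T) θ =
        (fderiv ℝ S (T θ)).comp (fderiv ℝ T θ) :=
      fderiv_comp θ (hS.differentiable one_ne_zero (T θ)) (hTd θ)
    have hid : S ∘ T = id := funext hTS
    rw [hid, fderiv_id] at hcomp
    have hdet1 : (fderiv ℝ S (T θ)).det * (fderiv ℝ T θ).det = 1 := by
      have := congrArg ContinuousLinearMap.det hcomp
      simpa [ContinuousLinearMap.det, ContinuousLinearMap.coe_comp,
        LinearMap.det_comp] using this.symm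
    intro h
    rw [h, mul_zero] at hdet1
    exact zero_ne_one hdet1
  have hdetpos : ∀ θ, 0 < |(fderiv ℝ T θ).det| := fun θ => abs_pos.mpr (hdet θ)
  have hptpos : ∀ θ, 0 < p (T θ) * |(fderiv ℝ T θ).det| :=
    fun θ => mul_pos (hp0 (T θ)) (hdetpos θ)
  -- change of variables: ∫ |det DT| * p ∘ T = ∫ p = 1
  have hfd : ∀ x ∈ (Set.univ : Set (EuclideanSpace ℝ (Fin n))),
      HasFDerivWithinAt T (fderiv ℝ T x) Set.univ x :=
    fun x _ => ((hTd x).hasFDerivAt).hasFDerivWithinAt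
  have hinj : Set.InjOn T Set.univ := (hTS.injective).injOn
  have hcov : ∫ θ, |(fderiv ℝ T θ).det| * p (T θ) = 1 := by
    have h := integral_image_eq_integral_abs_det_fderiv_smul volume
      MeasurableSet.univ hfd hinj p
    rw [Set.image_univ, hST.surjective.range_eq, setIntegral_univ, setIntegral_univ] at h
    simp only [smul_eq_mul] at h
    rw [← h]
    exact hp1
  -- a.e. identity π = exp c * π̃
  have hae : ∀ᵐ θ : EuclideanSpace ℝ (Fin n) ∂volume,
      π θ = Real.exp c * (p (T θ) * |(fderiv ℝ T θ).det|) := by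
    filter_upwards [hc] with θ hθ
    have h1 : Real.log (π θ) = c + Real.log (p (T θ) * |(fderiv ℝ T θ).det|) := by
      linarith
    calc π θ = Real.exp (Real.log (π θ)) := (Real.exp_log (hπ0 θ)).symm
      _ = Real.exp c * Real.exp (Real.log (p (T θ) * |(fderiv ℝ T θ).det|)) := by
          rw [h1, Real.exp_add]
      _ = Real.exp c * (p (T θ) * |(fderiv ℝ T θ).det|) := by
          rw [Real.exp_log (hptpos θ)]
  have hexp : Real.exp c = 1 := by
    have h1 : ∫ θ, π θ =
        ∫ θ, Real.exp c * (p (T θ) * |(fderiv ℝ T θ).det|) := integral_congr_ae hae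
    have h2 : ∫ θ, Real.exp c * (p (T θ) * |(fderiv ℝ T θ).det|) =
        Real.exp c * ∫ θ, p (T θ) * |(fderiv ℝ T θ).det| := integral_const_mul _ _
    have h3 : ∫ θ, p (T θ) * |(fderiv ℝ T θ).det| = 1 := by
      rw [← hcov]; congr 1; ext θ; ring
    rw [hπ1, h2, h3, mul_one] at h1
    exact h1.symm
  have hc0 : c = 0 := by rw [← Real.log_exp c, hexp, Real.log_one]
  have hae' : ∀ᵐ θ : EuclideanSpace ℝ (Fin n) ∂volume,
      π θ = p (T θ) * |(fderiv ℝ T θ).det| := by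
    filter_upwards [hae] with θ hθ
    rw [hθ, hc0, Real.exp_zero, one_mul]
  refine ⟨hc0, hae', ?_⟩
  -- pushforward
  have hdm : Measurable fun θ => ENNReal.ofReal |(fderiv ℝ T θ).det| := by
    have : Continuous fun θ => |(fderiv ℝ T θ).det| :=
      (ContinuousLinearMap.continuous_det.comp (hT.continuous_fderiv one_ne_zero)).abs
    exact ENNReal.measurable_ofReal.comp this.measurable
  -- p is integrable hence a.e. measurable; take a measurable representative p'
  have hpint : Integrable p := by
    by_contra h
    rw [integral_undef h] at hp1
    exact zero_ne_one hp1
  set p' : EuclideanSpace ℝ (Fin n) → ℝ := hpint.1.mk p with hp'def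
  have hp'meas : Measurable p' := hpint.1.stronglyMeasurable_mk.measurable
  have hpp' : p =ᵐ[volume] p' := hpint.1.ae_eq_mk
  -- pulling back the a.e. equality along T (S maps null sets to null sets)
  have hppT : (fun θ => p (T θ)) =ᵐ[volume] fun θ => p' (T θ) := by
    have hN : volume {x | p x ≠ p' x} = 0 := hpp'
    have himg : T ⁻¹' {x | p x ≠ p' x} = S '' {x | p x ≠ p' x} := by
      ext θ
      constructor
      · intro hθ; exact ⟨T θ, hθ, hTS θ⟩
      · rintro ⟨x, hx, rfl⟩; simpa [Set.mem_preimage, hST x] using hx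
    have hz : volume (S '' {x | p x ≠ p' x}) = 0 :=
      addHaar_image_eq_zero_of_differentiableOn_of_addHaar_eq_zero volume
        ((hS.differentiable one_ne_zero).differentiableOn) hN
    have : volume (T ⁻¹' {x | p x ≠ p' x}) = 0 := by rw [himg]; exact hz
    exact this
  have hpm : Measurable fun x => ENNReal.ofReal (p' x) :=
    ENNReal.measurable_ofReal.comp hp'meas
  have hTm : Measurable T := hT.continuous.measurable
  have hwd : volume.withDensity (fun θ => ENNReal.ofReal (π θ)) =
      (volume.withDensity fun θ => ENNReal.ofReal |(fderiv ℝ T θ).det|).withDensity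
        ((fun x => ENNReal.ofReal (p' x)) ∘ T) := by
    rw [← withDensity_mul _ hdm (hpm.comp hTm)]
    apply withDensity_congr_ae
    filter_upwards [hae', hppT] with θ hθ hθ'
    rw [hθ, ENNReal.ofReal_mul (hp0 (T θ)).le, hθ']
    simp [Pi.mul_apply, mul_comm]
  have hmapd : (volume.withDensity fun θ => ENNReal.ofReal |(fderiv ℝ T θ).det|).map T
      = volume := by
    have h := map_withDensity_abs_det_fderiv_eq_addHaar volume MeasurableSet.univ.nullMeasurableSet hfd hinj
    rw [Measure.restrict_univ, Set.image_univ, hST.surjective.range_eq,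
      Measure.restrict_univ] at h
    exact h
  rw [hwd, map_withDensity_comp _ hTm hpm, hmapd]
  apply withDensity_congr_ae
  filter_upwards [hpp'] with x hx
  rw [hx]
end

section
/- Let π : ℝⁿ → (0,∞) be differentiable and super-exponentially light, i.e., lim_{‖x‖→∞} (x/‖x‖)·∇ log π(x) = −∞. Then for every u > 0 and every c > 0 there exists r₄ > u such that for all x with ‖x‖ > r₄: π(x − u·x/‖x‖) ≥ c · π(x). -/
open MeasureTheory Filter

/-- If `π : ℝⁿ → (0,∞)` is differentiable and super-exponentially
light (for every `M > 0` there is `r` such that `‖x‖ > r` implies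
`(x/‖x‖)·∇ log π(x) ≤ −M`), then for every `u > 0` and `c > 0` there is `r₄ > u` such
that `‖x‖ > r₄` implies `π(x − u·x/‖x‖) ≥ c·π(x)`. -/
theorem stmt_9 (n : ℕ) (π : EuclideanSpace ℝ (Fin n) → ℝ)
    (hpos : ∀ x, 0 < π x) (hdiff : Differentiable ℝ π)
    (hsel : ∀ M : ℝ, 0 < M → ∃ r : ℝ, ∀ x : EuclideanSpace ℝ (Fin n), r < ‖x‖ →
      (inner ℝ (‖x‖⁻¹ • x) (gradient (fun y => Real.log (π y)) x) : ℝ) ≤ -M) :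
    ∀ u : ℝ, 0 < u → ∀ c : ℝ, 0 < c → ∃ r₄ : ℝ, u < r₄ ∧
      ∀ x : EuclideanSpace ℝ (Fin n), r₄ < ‖x‖ →
        c * π x ≤ π (x - (u * ‖x‖⁻¹) • x) := by
  intro u hu c hc
  set M : ℝ := max 1 (Real.log c / u) with hMdef
  have hM0 : (0 : ℝ) < M := lt_of_lt_of_le one_pos (le_max_left _ _)
  obtain ⟨r, hr⟩ := hsel M hM0
  refine ⟨max r 0 + u + 1, by have := le_max_right r 0; linarith, ?_⟩
  intro x hx
  have hxu : u + 1 < ‖x‖ := by have := le_max_right r 0; linarith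
  have hxr : max r 0 + u < ‖x‖ := by linarith
  have hxpos : (0 : ℝ) < ‖x‖ := by linarith
  have hxne : ‖x‖ ≠ 0 := ne_of_gt hxpos
  set L : EuclideanSpace ℝ (Fin n) → ℝ := fun y => Real.log (π y) with hLdef
  have hL : Differentiable ℝ L := fun y => ((hdiff y).log (hpos y).ne')
  set f : ℝ → EuclideanSpace ℝ (Fin n) := fun t => x - (t * ‖x‖⁻¹) • x with hfdef
  have hf : ∀ t : ℝ, HasDerivAt f (-(‖x‖⁻¹ • x)) t := by
    intro t
    have h1 : HasDerivAt (fun t : ℝ => (t * ‖x‖⁻¹) • x) ((1 * ‖x‖⁻¹) • x) t :=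
      ((hasDerivAt_id t).mul_const ‖x‖⁻¹).smul_const x
    have h2 := (hasDerivAt_const t x).sub h1
    exact h2.congr_deriv (by simp)
  -- norm of f t
  have hnorm : ∀ t : ℝ, 0 ≤ t → t ≤ ‖x‖ → ‖f t‖ = ‖x‖ - t := by
    intro t ht0 ht1
    have : f t = (1 - t * ‖x‖⁻¹) • x := by
      simp [hfdef, sub_smul, one_smul]
    rw [this, norm_smul]
    have h1 : 0 ≤ 1 - t * ‖x‖⁻¹ := by
      rw [sub_nonneg]
      calc t * ‖x‖⁻¹ ≤ ‖x‖ * ‖x‖⁻¹ := by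
            apply mul_le_mul_of_nonneg_right ht1 (by positivity)
        _ = 1 := mul_inv_cancel₀ hxne
    rw [Real.norm_eq_abs, abs_of_nonneg h1]
    field_simp
  -- unit vector of f t
  have hunit : ∀ t : ℝ, 0 ≤ t → t < ‖x‖ → ‖f t‖⁻¹ • f t = ‖x‖⁻¹ • x := by
    intro t ht0 ht1
    have hft : f t = (1 - t * ‖x‖⁻¹) • x := by
      simp [hfdef, sub_smul, one_smul]
    rw [hnorm t ht0 ht1.le, hft, smul_smul]
    congr 1
    have hne : ‖x‖ - t ≠ 0 := ne_of_gt (by linarith)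
    field_simp
  set g : ℝ → ℝ := fun t => L (f t) with hgdef
  have hg : ∀ t : ℝ, HasDerivAt g
      ((InnerProductSpace.toDual ℝ _ (gradient L (f t))) (-(‖x‖⁻¹ • x))) t := by
    intro t
    exact ((hL.differentiableAt (x := f t)).hasGradientAt.hasFDerivAt).comp_hasDerivAt t (hf t)
  have hderiv : ∀ t ∈ interior (Set.Icc (0:ℝ) u), M ≤ deriv g t := by
    intro t ht
    rw [interior_Icc] at ht
    have ht0 : 0 ≤ t := ht.1.le
    have htx : t < ‖x‖ := by linarith [ht.2]
    have hftnorm : ‖f t‖ = ‖x‖ - t := hnorm t ht0 htx.le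
    have hftr : r < ‖f t‖ := by
      rw [hftnorm]
      have := le_max_left r 0
      linarith [ht.2]
    have hbound := hr (f t) hftr
    rw [hunit t ht0 htx] at hbound
    rw [(hg t).deriv]
    rw [InnerProductSpace.toDual_apply_apply, inner_neg_right, real_inner_comm]
    linarith
  have hC := (convex_Icc (0:ℝ) u).mul_sub_le_image_sub_of_le_deriv
    (Continuous.continuousOn (by
      exact continuous_iff_continuousAt.2 fun t => ((hg t).differentiableAt).continuousAt))
    (fun t _ => ((hg t).differentiableAt).differentiableWithinAt)
    hderiv 0 (Set.left_mem_Icc.2 hu.le) u (Set.right_mem_Icc.2 hu.le) hu.le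
  -- hC : M * (u - 0) ≤ g u - g 0
  have hMu : Real.log c ≤ M * u := by
    have h1 : Real.log c / u ≤ M := le_max_right _ _
    calc Real.log c = (Real.log c / u) * u := by field_simp
      _ ≤ M * u := mul_le_mul_of_nonneg_right h1 hu.le
  have hg0 : g 0 = Real.log (π x) := by simp [hgdef, hfdef, hLdef]
  have hgu : g u = Real.log (π (x - (u * ‖x‖⁻¹) • x)) := rfl
  have hlog : Real.log (c * π x) ≤ Real.log (π (x - (u * ‖x‖⁻¹) • x)) := by
    rw [Real.log_mul hc.ne' (hpos x).ne']
    rw [hg0, hgu] at hC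
    linarith
  have := Real.exp_le_exp.2 hlog
  rwa [Real.exp_log (mul_pos hc (hpos x)), Real.exp_log (hpos _)] at this
end

section
/- Let π : ℝⁿ → (0,∞) be a continuously differentiable probability density that is super-exponentially light and satisfies the curvature condition. Fix 0 < k_L ≤ k_U < ∞ and isotropic centered Gaussian densities g_L, g_U on ℝⁿ, and let Q be the associated Gaussian-bounded proposal family. For q ∈ Q and x ∈ ℝⁿ let R_q(x) = {y ∈ ℝⁿ : π(y)q(x|y) < π(x)q(y|x)} be the region of possible rejection. Then there exist ε > 0 and r₁ < ∞ such that for every q ∈ Q and every x with ‖x‖ > r₁: ∫_{R_q(x)} q(y|x) dy ≤ 1 − ε. In particular, limsup_{‖x‖→∞} sup_{q∈Q} ∫_{R_q(x)} q(y|x) dy < 1. -/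
open MeasureTheory Filter

/-- Membership in the Gaussian-bounded proposal family determined by
`0 < k_L ≤ k_U` and isotropic centered Gaussian densities `g_L, g_U`:
`q(y|x)` (written `q y x`) is a measurable, everywhere positive probability density in
its first argument sandwiched between `k_L·g_L(y−x)` and `k_U·g_U(y−x)`. -/
def MemProposalFamily (n : ℕ) (kL kU : ℝ)
    (gL gU : EuclideanSpace ℝ (Fin n) → ℝ)
    (q : EuclideanSpace ℝ (Fin n) → EuclideanSpace ℝ (Fin n) → ℝ) : Prop :=
  Measurable (fun p : EuclideanSpace ℝ (Fin n) × EuclideanSpace ℝ (Fin n) => q p.1 p.2) ∧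
  (∀ x y, 0 < q y x) ∧
  (∀ x, ∫ y, q y x = 1) ∧
  (∀ x y, kL * gL (y - x) ≤ q y x ∧ q y x ≤ kU * gU (y - x))

/-- A strictly positive differentiable density `π` on ℝⁿ is super-exponentially light if
`(x/‖x‖)·∇ log π(x) → −∞` as `‖x‖ → ∞`. -/
def SuperExpLight (n : ℕ) (π : EuclideanSpace ℝ (Fin n) → ℝ) : Prop :=
  ∀ M : ℝ, 0 < M → ∃ r : ℝ, ∀ x : EuclideanSpace ℝ (Fin n), r < ‖x‖ →
    (inner ℝ (‖x‖⁻¹ • x) (gradient (fun y => Real.log (π y)) x) : ℝ) ≤ -M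

/-- The curvature condition: there exist `η > 0` and `r₀` such that `‖x‖ > r₀` implies
`∇π(x) ≠ 0` and `(x/‖x‖)·∇π(x)/‖∇π(x)‖ ≤ −η`. -/
def CurvatureCondition (n : ℕ) (π : EuclideanSpace ℝ (Fin n) → ℝ) : Prop :=
  ∃ η : ℝ, 0 < η ∧ ∃ r₀ : ℝ, ∀ x : EuclideanSpace ℝ (Fin n), r₀ < ‖x‖ →
    gradient π x ≠ 0 ∧
    (inner ℝ (‖x‖⁻¹ • x) (‖gradient π x‖⁻¹ • gradient π x) : ℝ) ≤ -η

section Aux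

variable {n : ℕ}

lemma aux_gradient_log (π : EuclideanSpace ℝ (Fin n) → ℝ) (hpos : ∀ x, 0 < π x)
    (hC1 : ContDiff ℝ 1 π) (w : EuclideanSpace ℝ (Fin n)) :
    HasGradientAt (fun y => Real.log (π y)) ((π w)⁻¹ • gradient π w) w := by
  have hd : DifferentiableAt ℝ π w := (hC1.differentiable one_ne_zero).differentiableAt
  have h2 : HasDerivAt Real.log (π w)⁻¹ (π w) := Real.hasDerivAt_log (hpos w).ne'
  have h3 : HasFDerivAt (fun y => Real.log (π y)) ((π w)⁻¹ • fderiv ℝ π w) w :=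
    h2.comp_hasFDerivAt w hd.hasFDerivAt
  have h4 := h3.hasGradientAt
  rwa [LinearIsometryEquiv.map_smul] at h4

lemma aux_unit_close (a b : EuclideanSpace ℝ (Fin n)) (ha : a ≠ 0) (hb : b ≠ 0) :
    ‖‖a‖⁻¹ • a - ‖b‖⁻¹ • b‖ ≤ 2 * ‖a - b‖ / ‖b‖ := by
  have ha' : (0:ℝ) < ‖a‖ := norm_pos_iff.mpr ha
  have hb' : (0:ℝ) < ‖b‖ := norm_pos_iff.mpr hb
  have key : ‖a‖⁻¹ • a - ‖b‖⁻¹ • b = ‖b‖⁻¹ • ((‖b‖ * ‖a‖⁻¹) • a - b) := by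
    rw [smul_sub, smul_smul]
    congr 2
    field_simp
  rw [key, norm_smul, norm_inv, norm_norm]
  have h1 : ‖(‖b‖ * ‖a‖⁻¹) • a - b‖ ≤ ‖(‖b‖ * ‖a‖⁻¹) • a - a‖ + ‖a - b‖ :=
    norm_sub_le_norm_sub_add_norm_sub _ _ _
  have h2 : ‖(‖b‖ * ‖a‖⁻¹) • a - a‖ = |‖b‖ - ‖a‖| := by
    have h : (‖b‖ * ‖a‖⁻¹) • a - a = (‖b‖ * ‖a‖⁻¹ - 1) • a := by rw [sub_smul, one_smul]
    rw [h, norm_smul, Real.norm_eq_abs,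
      show (‖b‖ * ‖a‖⁻¹ - 1) = (‖b‖ - ‖a‖) * ‖a‖⁻¹ by field_simp,
      abs_mul, abs_of_pos (inv_pos.mpr ha')]
    field_simp
  have h3 : |‖b‖ - ‖a‖| ≤ ‖a - b‖ := by
    rw [abs_sub_comm]; exact abs_norm_sub_norm_le a b
  rw [div_eq_inv_mul]
  have h5 : ‖(‖b‖ * ‖a‖⁻¹) • a - b‖ ≤ 2 * ‖a - b‖ := by rw [h2] at h1; linarith
  exact mul_le_mul_of_nonneg_left h5 (by positivity)

end Aux

set_option maxHeartbeats 2000000 in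
/-- For a continuously differentiable, super-exponentially light target
density satisfying the curvature condition, the probability mass that a
Gaussian-bounded proposal places on the region of possible rejection
`R_q(x) = {y : π(y)q(x|y) < π(x)q(y|x)}` is uniformly bounded away from `1` for
all `x` sufficiently far from the origin. -/
theorem stmt_10 (n : ℕ) (π : EuclideanSpace ℝ (Fin n) → ℝ)
    (hpos : ∀ x, 0 < π x) (hC1 : ContDiff ℝ 1 π) (hπ1 : ∫ x, π x = 1)
    (hsel : SuperExpLight n π) (hcurv : CurvatureCondition n π)
    (kL kU : ℝ) (hkL : 0 < kL) (hkLU : kL ≤ kU)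
    (gL gU : EuclideanSpace ℝ (Fin n) → ℝ)
    (hgL : IsIsotropicGaussian n gL) (hgU : IsIsotropicGaussian n gU) :
    ∃ ε : ℝ, 0 < ε ∧ ∃ r₁ : ℝ,
      ∀ q : EuclideanSpace ℝ (Fin n) → EuclideanSpace ℝ (Fin n) → ℝ,
        MemProposalFamily n kL kU gL gU q →
        ∀ x : EuclideanSpace ℝ (Fin n), r₁ < ‖x‖ →
          (∫ y in {y : EuclideanSpace ℝ (Fin n) | π y * q x y < π x * q y x}, q y x)
            ≤ 1 - ε := by
  obtain ⟨σL, hσL, hgLdef⟩ := hgL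
  obtain ⟨σU, hσU, hgUdef⟩ := hgU
  obtain ⟨η₀, hη₀, r₀, hcv⟩ := hcurv
  set η : ℝ := min η₀ 1 with hη_def
  have hη : 0 < η := lt_min hη₀ one_pos
  have hη1 : η ≤ 1 := min_le_right _ _
  set ρ : ℝ := η / 16 with hρ_def
  have hρ : 0 < ρ := by positivity
  have hρ16 : ρ ≤ 1 / 16 := by rw [hρ_def]; linarith
  set CL : ℝ := (2 * Real.pi * σL ^ 2) ^ (-(n : ℝ) / 2) with hCL_def
  set CU : ℝ := (2 * Real.pi * σU ^ 2) ^ (-(n : ℝ) / 2) with hCU_def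
  have hCL : 0 < CL := Real.rpow_pos_of_pos (by positivity) _
  have hCU : 0 < CU := Real.rpow_pos_of_pos (by positivity) _
  set G : ℝ := (CU / CL) * Real.exp ((1 + ρ) ^ 2 * |1 / (2 * σL ^ 2) - 1 / (2 * σU ^ 2)|)
    with hG_def
  have hGpos : 0 < G := by positivity
  -- ratio bound
  have hratio : ∀ z : EuclideanSpace ℝ (Fin n), ‖z‖ ≤ 1 + ρ → gU z ≤ G * gL z := by
    intro z hz
    rw [hgLdef, hgUdef, hG_def]
    rw [show (CU / CL) * Real.exp ((1 + ρ) ^ 2 * |1 / (2 * σL ^ 2) - 1 / (2 * σU ^ 2)|) *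
        (CL * Real.exp (-‖z‖ ^ 2 / (2 * σL ^ 2))) =
        CU * ((Real.exp ((1 + ρ) ^ 2 * |1 / (2 * σL ^ 2) - 1 / (2 * σU ^ 2)|) *
          Real.exp (-‖z‖ ^ 2 / (2 * σL ^ 2)))) by field_simp]
    rw [← Real.exp_add]
    apply mul_le_mul_of_nonneg_left _ hCU.le
    apply Real.exp_le_exp.mpr
    have h1 : -‖z‖ ^ 2 / (2 * σU ^ 2) - (-‖z‖ ^ 2 / (2 * σL ^ 2)) =
        ‖z‖ ^ 2 * (1 / (2 * σL ^ 2) - 1 / (2 * σU ^ 2)) := by field_simp; ring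
    have h2 : ‖z‖ ^ 2 * (1 / (2 * σL ^ 2) - 1 / (2 * σU ^ 2)) ≤
        (1 + ρ) ^ 2 * |1 / (2 * σL ^ 2) - 1 / (2 * σU ^ 2)| := by
      calc ‖z‖ ^ 2 * (1 / (2 * σL ^ 2) - 1 / (2 * σU ^ 2))
          ≤ ‖z‖ ^ 2 * |1 / (2 * σL ^ 2) - 1 / (2 * σU ^ 2)| := by
            apply mul_le_mul_of_nonneg_left (le_abs_self _) (by positivity)
        _ ≤ (1 + ρ) ^ 2 * |1 / (2 * σL ^ 2) - 1 / (2 * σU ^ 2)| := by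
            apply mul_le_mul_of_nonneg_right _ (abs_nonneg _)
            exact pow_le_pow_left₀ (norm_nonneg z) hz 2
    linarith
  set K : ℝ := kU * G / kL with hK_def
  have hkU : 0 < kU := lt_of_lt_of_le hkL hkLU
  have hKpos : 0 < K := div_pos (mul_pos hkU hGpos) hkL
  set c₀ : ℝ := |Real.log K| + 1 with hc₀_def
  have hc₀ : 0 < c₀ := by positivity
  set M : ℝ := 2 * c₀ / (η * (1 - ρ)) with hM_def
  have h1ρ : (0:ℝ) < 1 - ρ := by linarith
  have hM : 0 < M := div_pos (by positivity) (mul_pos hη h1ρ)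
  obtain ⟨rM, hrM⟩ := hsel M hM
  set r₁ : ℝ := max (max rM r₀) 0 + 2 + 8 * (1 + ρ) / η with hr₁_def
  set gmin : ℝ := CL * Real.exp (-(1 + ρ) ^ 2 / (2 * σL ^ 2)) with hgmin_def
  have hgmin : 0 < gmin := by positivity
  set ε : ℝ := kL * gmin *
    (volume (Metric.ball (0 : EuclideanSpace ℝ (Fin n)) ρ)).toReal with hε_def
  have hballpos : 0 < (volume (Metric.ball (0 : EuclideanSpace ℝ (Fin n)) ρ)).toReal :=
    ENNReal.toReal_pos (Metric.measure_ball_pos volume 0 hρ).ne' measure_ball_lt_top.ne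
  have hε : 0 < ε := by positivity
  clear_value η ρ CL CU G K c₀ M r₁ gmin ε
  refine ⟨ε, hε, r₁, ?_⟩
  rintro q ⟨hqm, hqpos, hqint, hqbd⟩ x hx
  have hxpos : (0:ℝ) < ‖x‖ := by
    have : (0:ℝ) ≤ max (max rM r₀) 0 := le_max_right _ _
    have h8 : 0 < 8 * (1 + ρ) / η := by positivity
    rw [hr₁_def] at hx; linarith
  have hxne : x ≠ 0 := by simpa [norm_pos_iff] using hxpos
  set xh : EuclideanSpace ℝ (Fin n) := ‖x‖⁻¹ • x with hxh_def
  have hxhnorm : ‖xh‖ = 1 := by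
    rw [hxh_def, norm_smul, norm_inv, norm_norm, inv_mul_cancel₀ hxpos.ne']
  set B : Set (EuclideanSpace ℝ (Fin n)) := Metric.ball (x - xh) ρ with hB_def
  -- Main analytic key: π is much bigger on B
  have key : ∀ y ∈ B, K * π x ≤ π y := by
    intro y hy
    have hηη₀ : η ≤ η₀ := by rw [hη_def]; exact min_le_left _ _
    have hball : ‖(x - y) - xh‖ < ρ := by
      have h1 : ‖y - (x - xh)‖ < ρ := by
        rw [hB_def] at hy; simpa [dist_eq_norm] using hy
      calc ‖(x - y) - xh‖ = ‖-(y - (x - xh))‖ := by congr 1; abel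
        _ = ‖y - (x - xh)‖ := norm_neg _
        _ < ρ := h1
    have habs : |‖x - y‖ - 1| < ρ := by
      have h := abs_norm_sub_norm_le (x - y) xh
      rw [hxhnorm] at h
      exact lt_of_le_of_lt h hball
    have hd_lb : 1 - ρ ≤ ‖x - y‖ := by have := abs_lt.mp habs; linarith
    have hd_ub : ‖x - y‖ ≤ 1 + ρ := by have := abs_lt.mp habs; linarith
    have hdpos : (0:ℝ) < ‖x - y‖ := by linarith
    have hxyne : x - y ≠ 0 := by simpa [norm_pos_iff] using hdpos
    set u : EuclideanSpace ℝ (Fin n) := ‖x - y‖⁻¹ • (x - y) with hu_def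
    set γ : ℝ → EuclideanSpace ℝ (Fin n) := fun t => y + t • (x - y) with hγ_def
    set f : ℝ → ℝ := fun t => Real.log (π (γ t)) with hf_def
    set F' : ℝ → ℝ :=
      fun t => (inner ℝ ((π (γ t))⁻¹ • gradient π (γ t)) (x - y) : ℝ) with hF'_def
    have hfd : ∀ t : ℝ, HasDerivAt f (F' t) t := by
      intro t
      have hγd : HasDerivAt γ (x - y) t := by
        have h := ((hasDerivAt_id t).smul_const (x - y)).const_add y
        simpa [hγ_def] using h
      have hg := (aux_gradient_log π hpos hC1 (γ t)).hasFDerivAt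
      have h2 := hg.comp_hasDerivAt t hγd
      have h3 : (InnerProductSpace.toDual ℝ (EuclideanSpace ℝ (Fin n))
          ((π (γ t))⁻¹ • gradient π (γ t))) (x - y) = F' t := by
        rw [InnerProductSpace.toDual_apply_apply]
      rw [h3] at h2
      exact h2
    -- derivative bound
    have hderiv_le : ∀ t ∈ Set.Ioo (0:ℝ) 1, F' t ≤ -c₀ := by
      intro t ht
      set w : EuclideanSpace ℝ (Fin n) := γ t with hw_def
      have hxw : x - w = (1 - t) • (x - y) := by
        rw [hw_def, hγ_def]
        simp only [sub_smul, one_smul]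
        abel
      have hxwnorm : ‖x - w‖ ≤ 1 + ρ := by
        rw [hxw, norm_smul, Real.norm_eq_abs,
          abs_of_nonneg (by linarith [ht.2] : (0:ℝ) ≤ 1 - t)]
        calc (1 - t) * ‖x - y‖ ≤ 1 * ‖x - y‖ :=
              mul_le_mul_of_nonneg_right (by linarith [ht.1]) (norm_nonneg _)
          _ = ‖x - y‖ := one_mul _
          _ ≤ 1 + ρ := hd_ub
      have h8pos : (0:ℝ) ≤ 8 * (1 + ρ) / η := by positivity
      have hwlb : max (max rM r₀) 0 + 8 * (1 + ρ) / η < ‖w‖ := by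
        have h1 : ‖x‖ - ‖w‖ ≤ ‖x - w‖ := norm_sub_norm_le x w
        rw [hr₁_def] at hx
        linarith
      have hwM : rM < ‖w‖ := by
        linarith [le_trans (le_max_left rM r₀) (le_max_left (max rM r₀) (0:ℝ)), hwlb, h8pos]
      have hwr₀ : r₀ < ‖w‖ := by
        linarith [le_trans (le_max_right rM r₀) (le_max_left (max rM r₀) (0:ℝ)), hwlb, h8pos]
      have hwpos : (0:ℝ) < ‖w‖ := by
        linarith [le_max_right (max rM r₀) (0:ℝ), hwlb, h8pos]
      have hwne : w ≠ 0 := by simpa [norm_pos_iff] using hwpos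
      set wh : EuclideanSpace ℝ (Fin n) := ‖w‖⁻¹ • w with hwh_def
      have hwhnorm : ‖wh‖ = 1 := by
        rw [hwh_def, norm_smul, norm_inv, norm_norm, inv_mul_cancel₀ hwpos.ne']
      have hsel_w := hrM w hwM
      have hgw := (aux_gradient_log π hpos hC1 w).gradient
      rw [hgw] at hsel_w
      rw [← hwh_def] at hsel_w
      obtain ⟨hpne, hcw⟩ := hcv w hwr₀
      set p : EuclideanSpace ℝ (Fin n) := gradient π w with hp_def
      have hpnorm : (0:ℝ) < ‖p‖ := norm_pos_iff.mpr hpne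
      set ph : EuclideanSpace ℝ (Fin n) := ‖p‖⁻¹ • p with hph_def
      have hphnorm : ‖ph‖ = 1 := by
        rw [hph_def, norm_smul, norm_inv, norm_norm, inv_mul_cancel₀ hpnorm.ne']
      have hcw' : (inner ℝ wh ph : ℝ) ≤ -η := le_trans hcw (by linarith)
      have hinner1 : (inner ℝ wh ((π w)⁻¹ • p) : ℝ) = (π w)⁻¹ * ‖p‖ * (inner ℝ wh ph : ℝ) := by
        have i1 : (inner ℝ wh ((π w)⁻¹ • p) : ℝ) = (π w)⁻¹ * (inner ℝ wh p : ℝ) :=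
          real_inner_smul_right _ _ _
        have i2 : (inner ℝ wh ph : ℝ) = ‖p‖⁻¹ * (inner ℝ wh p : ℝ) := by
          rw [hph_def]; exact real_inner_smul_right _ _ _
        rw [i1, i2, mul_assoc, ← mul_assoc ‖p‖, mul_inv_cancel₀ hpnorm.ne', one_mul]
      have hπw : (0:ℝ) < (π w)⁻¹ := inv_pos.mpr (hpos w)
      have hA0 : (0:ℝ) < (π w)⁻¹ * ‖p‖ := mul_pos hπw hpnorm
      have hAs : (π w)⁻¹ * ‖p‖ * (inner ℝ wh ph : ℝ) ≤ -M := by rw [← hinner1]; exact hsel_w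
      have hs_ge : -1 ≤ (inner ℝ wh ph : ℝ) := by
        have h := abs_real_inner_le_norm wh ph
        rw [hwhnorm, hphnorm, mul_one] at h
        exact le_trans (by simpa using neg_le_neg h) (neg_abs_le _)
      have hAM : M ≤ (π w)⁻¹ * ‖p‖ := by
        have h := mul_le_mul_of_nonneg_left hs_ge hA0.le
        linarith [le_trans h hAs]
      -- angle bounds
      have hxhne : xh ≠ 0 := by
        intro h; rw [h, norm_zero] at hxhnorm; norm_num at hxhnorm
      have hu_xh : ‖u - xh‖ ≤ 2 * ρ := by
        have h := aux_unit_close (x - y) xh hxyne hxhne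
        rw [hxhnorm, inv_one, one_smul, div_one] at h
        exact le_trans h (by linarith [hball])
      have hxh_wh : ‖xh - wh‖ ≤ η / 4 := by
        have h := aux_unit_close w x hwne hxne
        have h2 : 2 * ‖w - x‖ / ‖x‖ ≤ η / 4 := by
          rw [div_le_iff₀ hxpos]
          have hwx : ‖w - x‖ ≤ 1 + ρ := by rw [norm_sub_rev]; exact hxwnorm
          have hx8 : 8 * (1 + ρ) / η ≤ ‖x‖ := by
            rw [hr₁_def] at hx
            linarith [le_max_right (max rM r₀) (0:ℝ)]
          have he : (η/4) * (8 * (1 + ρ)/η) = 2*(1+ρ) := by field_simp; ring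
          have h4 : (0:ℝ) ≤ η/4 := by linarith
          have := mul_le_mul_of_nonneg_left hx8 h4
          linarith
        calc ‖xh - wh‖ = ‖wh - xh‖ := norm_sub_rev _ _
          _ ≤ 2 * ‖w - x‖ / ‖x‖ := h
          _ ≤ η/4 := h2
      have hu_wh : ‖u - wh‖ ≤ η / 2 := by
        calc ‖u - wh‖ ≤ ‖u - xh‖ + ‖xh - wh‖ := norm_sub_le_norm_sub_add_norm_sub _ _ _
          _ ≤ 2*ρ + η/4 := add_le_add hu_xh hxh_wh
          _ ≤ η/2 := by linarith [hρ_def.ge, hρ_def.le, hη]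
      have hup : (inner ℝ u ph : ℝ) ≤ -(η/2) := by
        have hsplit : (inner ℝ u ph : ℝ) - (inner ℝ wh ph : ℝ) = (inner ℝ (u - wh) ph : ℝ) := by
          rw [inner_sub_left]
        have h1 : (inner ℝ (u - wh) ph : ℝ) ≤ η/2 := by
          refine le_trans (real_inner_le_norm _ _) ?_
          rw [hphnorm, mul_one]
          exact hu_wh
        linarith [hcw', hsplit, h1]
      -- final computation of F' t
      have e0 : F' t = (inner ℝ ((π w)⁻¹ • p) (x - y) : ℝ) := rfl
      have hxy_eq : x - y = ‖x - y‖ • u := by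
        rw [hu_def, smul_smul, mul_inv_cancel₀ hdpos.ne', one_smul]
      have hp_eq : p = ‖p‖ • ph := by
        rw [hph_def, smul_smul, mul_inv_cancel₀ hpnorm.ne', one_smul]
      have e1 : (inner ℝ p (x - y) : ℝ) = ‖x - y‖ * (inner ℝ p u : ℝ) := by
        conv_lhs => rw [hxy_eq]
        exact real_inner_smul_right p u ‖x - y‖
      have e2 : (inner ℝ p u : ℝ) = ‖p‖ * (inner ℝ ph u : ℝ) := by
        conv_lhs => rw [hp_eq]
        exact real_inner_smul_left ph u ‖p‖
      have e3 : (inner ℝ ph u : ℝ) = (inner ℝ u ph : ℝ) := real_inner_comm _ _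
      have hMc : M * ((1 - ρ) * (η/2)) = c₀ := by
        rw [hM_def]
        field_simp
      rw [e0, real_inner_smul_left, e1, e2, e3]
      -- goal : (π w)⁻¹ * (‖x - y‖ * (‖p‖ * inner ℝ u ph)) ≤ -c₀
      have u1 : ‖x - y‖ * (inner ℝ u ph : ℝ) ≤ (1 - ρ) * (-(η/2)) := by
        have a1 : ‖x - y‖ * (inner ℝ u ph : ℝ) ≤ ‖x - y‖ * (-(η/2)) :=
          mul_le_mul_of_nonneg_left hup hdpos.le
        have a2 : ‖x - y‖ * (-(η/2)) ≤ (1 - ρ) * (-(η/2)) :=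
          mul_le_mul_of_nonpos_right hd_lb (by linarith)
        linarith
      have u2 : ((π w)⁻¹ * ‖p‖) * (‖x - y‖ * (inner ℝ u ph : ℝ)) ≤
          M * ((1 - ρ) * (-(η/2))) := by
        have hneg : (1 - ρ) * (-(η/2)) ≤ 0 :=
          mul_nonpos_of_nonneg_of_nonpos h1ρ.le (by linarith)
        have b1 : ((π w)⁻¹ * ‖p‖) * (‖x - y‖ * (inner ℝ u ph : ℝ)) ≤
            M * (‖x - y‖ * (inner ℝ u ph : ℝ)) :=
          mul_le_mul_of_nonpos_right hAM (le_trans u1 hneg)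
        have b2 : M * (‖x - y‖ * (inner ℝ u ph : ℝ)) ≤ M * ((1 - ρ) * (-(η/2))) :=
          mul_le_mul_of_nonneg_left u1 hM.le
        linarith
      calc (π w)⁻¹ * (‖x - y‖ * (‖p‖ * (inner ℝ u ph : ℝ)))
          = ((π w)⁻¹ * ‖p‖) * (‖x - y‖ * (inner ℝ u ph : ℝ)) := by ring
        _ ≤ M * ((1 - ρ) * (-(η/2))) := u2
        _ = -c₀ := by rw [← hMc]; ring
    -- mean value theorem
    have hcont : ContinuousOn f (Set.Icc (0:ℝ) 1) :=
      fun t _ => (hfd t).continuousAt.continuousWithinAt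
    have hdiff : DifferentiableOn ℝ f (interior (Set.Icc (0:ℝ) 1)) :=
      fun t _ => (hfd t).differentiableAt.differentiableWithinAt
    have hdb : ∀ t ∈ interior (Set.Icc (0:ℝ) 1), deriv f t ≤ -c₀ := by
      rw [interior_Icc]
      intro t ht
      rw [(hfd t).deriv]
      exact hderiv_le t ht
    have hmvt := (convex_Icc (0:ℝ) 1).image_sub_le_mul_sub_of_deriv_le hcont hdiff hdb
      0 (Set.left_mem_Icc.mpr zero_le_one) 1 (Set.right_mem_Icc.mpr zero_le_one) zero_le_one
    have hγ1 : γ 1 = x := by rw [hγ_def]; simp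
    have hγ0 : γ 0 = y := by rw [hγ_def]; simp
    have hf1 : f 1 = Real.log (π x) := by rw [hf_def]; simp only; rw [hγ1]
    have hf0 : f 0 = Real.log (π y) := by rw [hf_def]; simp only; rw [hγ0]
    have hlog : Real.log (π x) - Real.log (π y) ≤ -c₀ := by
      rw [hf1, hf0] at hmvt
      linarith
    have hlogK : Real.log K ≤ c₀ - 1 := by
      have := le_abs_self (Real.log K)
      linarith [hc₀_def.ge, hc₀_def.le]
    refine (Real.log_le_log_iff (mul_pos hKpos (hpos x)) (hpos y)).mp ?_
    rw [Real.log_mul hKpos.ne' (hpos x).ne']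
    linarith [hlog, hlogK]
  -- B is inside the acceptance region
  have hdist : ∀ y ∈ B, ‖y - x‖ ≤ 1 + ρ := by
    intro y hy
    have h1 : ‖y - (x - xh)‖ < ρ := by
      rw [hB_def] at hy; simpa [dist_eq_norm] using hy
    calc ‖y - x‖ = ‖(y - (x - xh)) + (-xh)‖ := by congr 1; abel
      _ ≤ ‖y - (x - xh)‖ + ‖-xh‖ := norm_add_le _ _
      _ ≤ 1 + ρ := by rw [norm_neg, hxhnorm]; linarith
  have hBacc : ∀ y ∈ B, π x * q y x ≤ π y * q x y := by
    intro y hy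
    have hyx : ‖y - x‖ ≤ 1 + ρ := hdist y hy
    have h1 : q y x ≤ kU * gU (y - x) := (hqbd x y).2
    have h2 : kL * gL (x - y) ≤ q x y := (hqbd y x).1
    have h3 : gU (y - x) ≤ G * gL (y - x) := hratio _ hyx
    have h4 : gL (y - x) = gL (x - y) := by rw [hgLdef, hgLdef, norm_sub_rev]
    have h5 : K * π x ≤ π y := key y hy
    have hgLpos : 0 < gL (x - y) := by rw [hgLdef]; positivity
    have hπx := hpos x
    have hπy := hpos y
    calc π x * q y x ≤ π x * (kU * (G * gL (x - y))) := by
          apply mul_le_mul_of_nonneg_left _ hπx.le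
          calc q y x ≤ kU * gU (y - x) := h1
            _ ≤ kU * (G * gL (y - x)) := by
                apply mul_le_mul_of_nonneg_left h3 (by linarith)
            _ = kU * (G * gL (x - y)) := by rw [h4]
      _ = (K * π x) * (kL * gL (x - y)) := by rw [hK_def]; field_simp
      _ ≤ π y * (kL * gL (x - y)) := by
          apply mul_le_mul_of_nonneg_right h5 (by positivity)
      _ ≤ π y * q x y := mul_le_mul_of_nonneg_left h2 hπy.le
  -- Integral bookkeeping
  have hqi : Integrable (fun y => q y x) volume := by
    by_contra h
    have h0 := hqint x
    rw [integral_undef h] at h0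
    norm_num at h0
  have hmq1 : Measurable fun y => q y x := hqm.comp (measurable_id.prodMk measurable_const)
  have hmq2 : Measurable fun y => q x y := hqm.comp (measurable_const.prodMk measurable_id)
  have hπm : Measurable π := hC1.continuous.measurable
  set R : Set (EuclideanSpace ℝ (Fin n)) := {y | π y * q x y < π x * q y x} with hR_def
  have hRm : MeasurableSet R := measurableSet_lt (hπm.mul hmq2) (hmq1.const_mul (π x))
  have hBm : MeasurableSet B := measurableSet_ball
  have hdisj : Disjoint R B := by
    rw [Set.disjoint_left]
    intro y hyR hyB
    exact absurd hyR (not_lt.mpr (hBacc y hyB))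
  have hunion : ∫ y in R ∪ B, q y x = (∫ y in R, q y x) + ∫ y in B, q y x :=
    setIntegral_union hdisj hBm hqi.integrableOn hqi.integrableOn
  have hle1 : ∫ y in R ∪ B, q y x ≤ 1 := by
    rw [← hqint x]
    exact setIntegral_le_integral hqi (Eventually.of_forall fun y => (hqpos x y).le)
  have hBlb : kL * gmin * (volume B).toReal ≤ ∫ y in B, q y x := by
    rw [show kL * gmin * (volume B).toReal = volume.real B • (kL * gmin) by
      rw [smul_eq_mul, mul_comm]; rfl]
    apply setIntegral_ge_of_const_le hBm measure_ball_lt_top.ne _ hqi.integrableOn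
    intro y hy
    have hyx : ‖y - x‖ ≤ 1 + ρ := hdist y hy
    have h1 : gmin ≤ gL (y - x) := by
      rw [hgLdef, hgmin_def]
      apply mul_le_mul_of_nonneg_left _ hCL.le
      apply Real.exp_le_exp.mpr
      apply (div_le_div_iff_of_pos_right (by positivity)).mpr
      have := pow_le_pow_left₀ (norm_nonneg (y - x)) hyx 2
      linarith
    calc kL * gmin ≤ kL * gL (y - x) := mul_le_mul_of_nonneg_left h1 hkL.le
      _ ≤ q y x := (hqbd x y).1
  have hvol : (volume B).toReal =
      (volume (Metric.ball (0 : EuclideanSpace ℝ (Fin n)) ρ)).toReal := by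
    rw [hB_def, Measure.addHaar_ball_center]
  have hεle : ε ≤ ∫ y in B, q y x := by
    rw [hε_def, ← hvol]
    exact hBlb
  have hfinal : (∫ y in R, q y x) + ε ≤ 1 := by
    have h0 : (0:ℝ) ≤ ∫ y in B, q y x := by linarith [hε.le]
    linarith [hunion, hle1, hεle]
  linarith [hfinal]
end

section
/- Let π : ℝⁿ → (0,∞) be a bounded strictly positive probability density, let α ∈ (0,1), and define the drift function V(x) = c_V π(x)^{−α} with c_V = sup_x π(x)^α < ∞. Fix 0 < k_L ≤ k_U < ∞ and isotropic centered Gaussian densities g_L, g_U, and let Q be the associated Gaussian-bounded proposal family. Then there exists B < ∞ such that for every q ∈ Q and every x ∈ ℝⁿ, the one-step expectation of V under the Metropolis–Hastings kernel satisfies ∫ α_q(x,y) q(y|x) V(y) dy + (1 − ∫ α_q(x,y) q(y|x) dy) V(x) ≤ B · V(x), where α_q(x,y) = min{1, π(y)q(x|y)/(π(x)q(y|x))}. -/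
open MeasureTheory Filter

theorem gauss_aux (n : ℕ) (g : EuclideanSpace ℝ (Fin n) → ℝ) (σ : ℝ) (hσ : 0 < σ)
    (hg : ∀ x, g x = (2 * Real.pi * σ ^ 2) ^ (-(n : ℝ) / 2) * Real.exp (-(‖x‖ ^ 2) / (2 * σ ^ 2))) :
    (∫ x, g x = 1) ∧ Integrable g := by
  have hb : 0 < 1 / (2 * σ ^ 2) := by positivity
  have hform : ∀ x : EuclideanSpace ℝ (Fin n),
      g x = (2 * Real.pi * σ ^ 2) ^ (-(n : ℝ) / 2) * Real.exp (-(1/(2*σ^2)) * ‖x‖ ^ 2) := by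
    intro x; rw [hg x]; ring_nf
  have hint : Integrable (fun x : EuclideanSpace ℝ (Fin n) =>
      (2 * Real.pi * σ ^ 2) ^ (-(n : ℝ) / 2) * Real.exp (-(1/(2*σ^2)) * ‖x‖ ^ 2)) := by
    apply Integrable.const_mul
    have := (GaussianFourier.integrable_cexp_neg_mul_sq_norm_add (V := EuclideanSpace ℝ (Fin n))
      (b := ((1/(2*σ^2) : ℝ) : ℂ)) (by rw [Complex.ofReal_re]; exact hb) 0 0).re
    apply this.congr
    filter_upwards with x
    rw [zero_mul, add_zero,
      show (-((1/(2*σ^2):ℝ):ℂ) * (‖x‖:ℂ)^2) = ((-(1/(2*σ^2)) * ‖x‖^2 : ℝ) : ℂ) by push_cast; ring,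
      ← Complex.ofReal_exp]
    exact RCLike.ofReal_re _
  constructor
  · rw [show (fun x => g x) = fun x => (2 * Real.pi * σ ^ 2) ^ (-(n : ℝ) / 2) * Real.exp (-(1/(2*σ^2)) * ‖x‖ ^ 2) from funext hform]
    rw [integral_const_mul, GaussianFourier.integral_rexp_neg_mul_sq_norm hb]
    have h2 : (Real.pi / (1 / (2 * σ ^ 2))) = 2 * Real.pi * σ ^ 2 := by field_simp
    rw [h2, show Module.finrank ℝ (EuclideanSpace ℝ (Fin n)) = n by simp]
    rw [← Real.rpow_add (by positivity), show (-(n:ℝ)/2 + (n:ℝ)/2) = 0 by ring, Real.rpow_zero]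
  · exact hint.congr (by filter_upwards with x using (hform x).symm)

/-- For a bounded strictly positive target density `π` and the drift
function `V(x) = c_V·π(x)^(−α)` with `c_V = sup_x π(x)^α`, the one-step expectation of
`V` under any Metropolis–Hastings kernel with Gaussian-bounded proposal is bounded by
a uniform multiple `B` of `V`. -/
theorem stmt_11 (n : ℕ) (π : EuclideanSpace ℝ (Fin n) → ℝ)
    (hpos : ∀ x, 0 < π x) (hπ1 : ∫ x, π x = 1)
    (hbdd : BddAbove (Set.range π))
    (α : ℝ) (hα0 : 0 < α) (hα1 : α < 1)
    (cV : ℝ) (hcV : cV = ⨆ x : EuclideanSpace ℝ (Fin n), π x ^ α)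
    (V : EuclideanSpace ℝ (Fin n) → ℝ)
    (hV : ∀ x, V x = cV * π x ^ (-α))
    (kL kU : ℝ) (hkL : 0 < kL) (hkLU : kL ≤ kU)
    (gL gU : EuclideanSpace ℝ (Fin n) → ℝ)
    (hgL : IsIsotropicGaussian n gL) (hgU : IsIsotropicGaussian n gU) :
    ∃ B : ℝ,
      ∀ q : EuclideanSpace ℝ (Fin n) → EuclideanSpace ℝ (Fin n) → ℝ,
        MemProposalFamily n kL kU gL gU q →
        ∀ x : EuclideanSpace ℝ (Fin n),
          (∫ y, min 1 (π y * q x y / (π x * q y x)) * q y x * V y)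
            + (1 - ∫ y, min 1 (π y * q x y / (π x * q y x)) * q y x) * V x
          ≤ B * V x := by
  obtain ⟨σ, hσ, hgUdef⟩ := hgU
  obtain ⟨hgU1, hgUint⟩ := gauss_aux n gU σ hσ hgUdef
  have hgUpos : ∀ z, 0 < gU z := by
    intro z; rw [hgUdef z]; positivity
  -- cV > 0
  have hbddα : BddAbove (Set.range fun z : EuclideanSpace ℝ (Fin n) => π z ^ α) := by
    obtain ⟨M, hM⟩ := hbdd
    refine ⟨M ^ α, ?_⟩
    rintro _ ⟨z, rfl⟩
    exact Real.rpow_le_rpow (hpos z).le (hM ⟨z, rfl⟩) hα0.le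
  have hcV0 : 0 < cV := by
    rw [hcV]
    exact lt_of_lt_of_le (Real.rpow_pos_of_pos (hpos 0) α) (le_ciSup hbddα 0)
  have hVpos : ∀ z, 0 < V z := fun z => by
    rw [hV z]; exact mul_pos hcV0 (Real.rpow_pos_of_pos (hpos z) _)
  refine ⟨kU + 1, ?_⟩
  rintro q ⟨hmeas, hqpos, hqint, hbound⟩ x
  have hkU : 0 < kU := lt_of_lt_of_le hkL hkLU
  -- pointwise bound
  have hpt : ∀ y, min 1 (π y * q x y / (π x * q y x)) * q y x * V y
      ≤ V x * (kU * gU (y - x)) := by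
    intro y
    set r := π y * q x y / (π x * q y x) with hr_def
    have hApos : 0 < q y x := hqpos x y
    have hBpos : 0 < q x y := hqpos y x
    have hrpos : 0 < r :=
      div_pos (mul_pos (hpos y) hBpos) (mul_pos (hpos x) hApos)
    have hG : 0 < kU * gU (y - x) := mul_pos hkU (hgUpos _)
    have hqA : q y x ≤ kU * gU (y - x) := (hbound x y).2
    have hqB : q x y ≤ kU * gU (y - x) := by
      have := (hbound y x).2
      have hnorm : gU (x - y) = gU (y - x) := by
        rw [hgUdef, hgUdef, norm_sub_rev]
      rwa [hnorm] at this
    have hmin : min 1 r ≤ r ^ α := by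
      rcases le_total r 1 with h | h
      · rw [min_eq_right h]
        calc r = r ^ (1:ℝ) := (Real.rpow_one r).symm
        _ ≤ r ^ α := Real.rpow_le_rpow_of_exponent_ge hrpos h hα1.le
      · rw [min_eq_left h]
        calc (1:ℝ) = 1 ^ α := (Real.one_rpow α).symm
        _ ≤ r ^ α := Real.rpow_le_rpow zero_le_one h hα0.le
    have step1 : min 1 r * q y x * V y ≤ r ^ α * q y x * V y := by
      apply mul_le_mul_of_nonneg_right (mul_le_mul_of_nonneg_right hmin hApos.le) (hVpos y).le
    have key : r ^ α * q y x * V y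
        = cV * π x ^ (-α) * (q x y ^ α * q y x ^ (1 - α)) := by
      rw [hr_def, hV y,
        Real.div_rpow (mul_nonneg (hpos y).le hBpos.le) (mul_nonneg (hpos x).le hApos.le),
        Real.mul_rpow (hpos y).le hBpos.le, Real.mul_rpow (hpos x).le hApos.le,
        Real.rpow_neg (hpos y).le, Real.rpow_neg (hpos x).le,
        Real.rpow_sub hApos, Real.rpow_one]
      have h1 : π y ^ α ≠ 0 := (Real.rpow_pos_of_pos (hpos y) α).ne'
      have h2 : π x ^ α ≠ 0 := (Real.rpow_pos_of_pos (hpos x) α).ne'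
      have h3 : q y x ^ α ≠ 0 := (Real.rpow_pos_of_pos hApos α).ne'
      field_simp
    have step2 : q x y ^ α * q y x ^ (1 - α) ≤ kU * gU (y - x) := by
      calc q x y ^ α * q y x ^ (1 - α)
          ≤ (kU * gU (y - x)) ^ α * (kU * gU (y - x)) ^ (1 - α) := by
            apply mul_le_mul (Real.rpow_le_rpow hBpos.le hqB hα0.le)
              (Real.rpow_le_rpow hApos.le hqA (by linarith))
              (Real.rpow_nonneg hApos.le _) (Real.rpow_nonneg hG.le _)
        _ = kU * gU (y - x) := by
            rw [← Real.rpow_add hG, show α + (1 - α) = 1 by ring, Real.rpow_one]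
    calc min 1 r * q y x * V y ≤ r ^ α * q y x * V y := step1
      _ = cV * π x ^ (-α) * (q x y ^ α * q y x ^ (1 - α)) := key
      _ ≤ cV * π x ^ (-α) * (kU * gU (y - x)) := by
          exact mul_le_mul_of_nonneg_left step2 (mul_nonneg hcV0.le (Real.rpow_nonneg (hpos x).le _))
      _ = V x * (kU * gU (y - x)) := by rw [hV x]
  -- nonnegativity of integrands
  have hnn : ∀ y, 0 ≤ min 1 (π y * q x y / (π x * q y x)) * q y x := by
    intro y
    apply mul_nonneg _ (hqpos x y).le
    exact le_min zero_le_one (div_nonneg (mul_nonneg (hpos y).le (hqpos y x).le)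
      (mul_nonneg (hpos x).le (hqpos x y).le))
  -- bound first integral
  have hintbd : Integrable (fun y => V x * (kU * gU (y - x))) :=
    ((hgUint.comp_sub_right x).const_mul kU).const_mul (V x)
  have hI1 : (∫ y, min 1 (π y * q x y / (π x * q y x)) * q y x * V y) ≤ V x * kU := by
    calc (∫ y, min 1 (π y * q x y / (π x * q y x)) * q y x * V y)
        ≤ ∫ y, V x * (kU * gU (y - x)) := by
          apply integral_mono_of_nonneg ?_ hintbd ?_
          · filter_upwards with y
            exact mul_nonneg (hnn y) (hVpos y).le
          · filter_upwards with y using hpt y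
      _ = V x * (kU * ∫ y, gU (y - x)) := by rw [integral_const_mul, integral_const_mul]
      _ = V x * kU := by rw [integral_sub_right_eq_self gU x, hgU1, mul_one]
  have hI2 : 0 ≤ ∫ y, min 1 (π y * q x y / (π x * q y x)) * q y x :=
    integral_nonneg fun y => hnn y
  have hVx := hVpos x
  nlinarith [hI1, hI2, hVx]
end

section
/- (Minorization condition.) Let π : ℝⁿ → (0,∞) be a continuous strictly positive probability density, let R_C > 0, and let C = {x ∈ ℝⁿ : ‖x‖ ≤ R_C}. Fix 0 < k_L ≤ k_U < ∞ and isotropic centered Gaussian densities g_L, g_U, with associated Gaussian-bounded proposal family Q. Then there exists δ > 0 such that for every q ∈ Q there is a probability measure ν_q concentrated on C with the property that for every x ∈ C and every Borel set A ⊆ ℝⁿ: ∫_A α_q(x,y) q(y|x) dy + (1 − ∫ α_q(x,y) q(y|x) dy)·1_A(x) ≥ δ · ν_q(A), where α_q(x,y) = min{1, π(y)q(x|y)/(π(x)q(y|x))}. (One may take ν_q to be the uniform probability measure on C, with δ independent of q ∈ Q.) -/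
open MeasureTheory Filter

/-- **minorization condition.** For a continuous strictly positive
target density `π` and the ball `C = {‖x‖ ≤ R_C}`, there exists `δ > 0` such that for
every Gaussian-bounded proposal `q` there is a probability measure `ν_q` concentrated
on `C` with `P_q(x, A) ≥ δ·ν_q(A)` for every `x ∈ C` and every Borel set `A`, where
`P_q` is the Metropolis–Hastings transition kernel. -/
theorem stmt_14 (n : ℕ) (π : EuclideanSpace ℝ (Fin n) → ℝ)
    (hpos : ∀ x, 0 < π x) (hcont : Continuous π) (hπ1 : ∫ x, π x = 1)
    (RC : ℝ) (hRC : 0 < RC)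
    (kL kU : ℝ) (hkL : 0 < kL) (hkLU : kL ≤ kU)
    (gL gU : EuclideanSpace ℝ (Fin n) → ℝ)
    (hgL : IsIsotropicGaussian n gL) (hgU : IsIsotropicGaussian n gU) :
    ∃ δ : ℝ, 0 < δ ∧
      ∀ q : EuclideanSpace ℝ (Fin n) → EuclideanSpace ℝ (Fin n) → ℝ,
        MemProposalFamily n kL kU gL gU q →
        ∃ ν : Measure (EuclideanSpace ℝ (Fin n)),
          IsProbabilityMeasure ν ∧
          ν (Metric.closedBall (0 : EuclideanSpace ℝ (Fin n)) RC)ᶜ = 0 ∧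
          ∀ x ∈ Metric.closedBall (0 : EuclideanSpace ℝ (Fin n)) RC,
            ∀ A : Set (EuclideanSpace ℝ (Fin n)), MeasurableSet A →
              δ * (ν A).toReal ≤
                (∫ y in A, min 1 (π y * q x y / (π x * q y x)) * q y x)
                + (1 - ∫ y, min 1 (π y * q x y / (π x * q y x)) * q y x)
                    * Set.indicator A (fun _ => (1 : ℝ)) x := by

  classical
  obtain ⟨σL, hσL, hgLdef⟩ := hgL
  set C : Set (EuclideanSpace ℝ (Fin n)) := Metric.closedBall (0 : EuclideanSpace ℝ (Fin n)) RC with hCdef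
  have hCmeas : MeasurableSet C := measurableSet_closedBall
  have hCcomp : IsCompact C := isCompact_closedBall _ _
  have hCne : C.Nonempty := ⟨0, by simp [hCdef, hRC.le]⟩
  obtain ⟨a, haC, ha'⟩ := hCcomp.exists_isMinOn hCne hcont.continuousOn
  obtain ⟨b, hbC, hb'⟩ := hCcomp.exists_isMaxOn hCne hcont.continuousOn
  have ha : ∀ y ∈ C, π a ≤ π y := fun y hy => ha' hy
  have hb : ∀ y ∈ C, π y ≤ π b := fun y hy => hb' hy
  have hπm : 0 < π a := hpos a
  have hπM : 0 < π b := hpos b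
  set mL : ℝ := (2 * Real.pi * σL ^ 2) ^ (-(n : ℝ) / 2) *
      Real.exp (-((2 * RC) ^ 2) / (2 * σL ^ 2)) with hmLdef
  have hA0 : (0:ℝ) < (2 * Real.pi * σL ^ 2) ^ (-(n : ℝ) / 2) :=
    Real.rpow_pos_of_pos (by positivity) _
  have hmL : 0 < mL := mul_pos hA0 (Real.exp_pos _)
  have hgLlb : ∀ z : EuclideanSpace ℝ (Fin n), ‖z‖ ≤ 2 * RC → mL ≤ gL z := by
    intro z hz
    rw [hgLdef z, hmLdef]
    refine mul_le_mul_of_nonneg_left (Real.exp_le_exp.2 ?_) hA0.le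
    have h1 : ‖z‖ ^ 2 ≤ (2 * RC) ^ 2 := by
      have := norm_nonneg z
      nlinarith
    have h2 : (0:ℝ) < 2 * σL ^ 2 := by positivity
    rw [neg_div, neg_div, neg_le_neg_iff]
    exact div_le_div_of_nonneg_right h1 h2.le
  set c : ℝ := kL * mL * π a / π b with hcdef
  have hc : 0 < c := div_pos (mul_pos (mul_pos hkL hmL) hπm) hπM
  set volC := volume C with hvolCdef
  have hvolC0 : 0 < volC := Metric.measure_closedBall_pos _ _ hRC
  have hvolCfin : volC < ⊤ := hCcomp.measure_lt_top
  have hvolCtR : 0 < volC.toReal := ENNReal.toReal_pos hvolC0.ne' hvolCfin.ne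
  refine ⟨c * volC.toReal, mul_pos hc hvolCtR, ?_⟩
  intro q hq
  obtain ⟨hqmeas, hqpos, hqint, hqbd⟩ := hq
  refine ⟨volC⁻¹ • volume.restrict C, ?_, ?_, ?_⟩
  · constructor
    rw [Measure.smul_apply, Measure.restrict_apply MeasurableSet.univ, Set.univ_inter,
      smul_eq_mul]
    exact ENNReal.inv_mul_cancel hvolC0.ne' hvolCfin.ne
  · rw [Measure.smul_apply, Measure.restrict_apply hCmeas.compl, Set.compl_inter_self,
      measure_empty, smul_eq_mul, mul_zero]
  · intro x hx A hA
    set f : EuclideanSpace ℝ (Fin n) → ℝ := fun y => min 1 (π y * q x y / (π x * q y x)) * q y x with hfdef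
    have hqxint : Integrable (fun y => q y x) := integrable_of_integral_eq_one (hqint x)
    have hq1 : Measurable (fun y => q x y) := hqmeas.comp measurable_prodMk_left
    have hq2 : Measurable (fun y => q y x) :=
      hqmeas.comp (measurable_id.prodMk measurable_const)
    have hfmeas : Measurable f :=
      (measurable_const.min (((hcont.measurable.mul hq1)).div
        (measurable_const.mul hq2))).mul hq2
    have hf0 : ∀ y, 0 ≤ f y := by
      intro y
      apply mul_nonneg _ (hqpos x y).le
      exact le_min zero_le_one (div_nonneg (mul_nonneg (hpos y).le (hqpos y x).le)
        (mul_nonneg (hpos x).le (hqpos x y).le))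
    have hfq : ∀ y, f y ≤ q y x := by
      intro y
      calc f y ≤ 1 * q y x := mul_le_mul_of_nonneg_right (min_le_left _ _) (hqpos x y).le
      _ = q y x := one_mul _
    have hfint : Integrable f :=
      hqxint.mono' hfmeas.aestronglyMeasurable
        (Filter.Eventually.of_forall fun y => by
          rw [Real.norm_eq_abs, abs_of_nonneg (hf0 y)]; exact hfq y)
    have hflb : ∀ y ∈ C, c ≤ f y := by
      intro y hy
      have hnorm : ‖y - x‖ ≤ 2 * RC := by
        calc ‖y - x‖ ≤ ‖y‖ + ‖x‖ := norm_sub_le _ _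
        _ ≤ RC + RC := add_le_add (mem_closedBall_zero_iff.1 hy)
            (mem_closedBall_zero_iff.1 hx)
        _ = 2 * RC := by ring
      have hnorm' : ‖x - y‖ ≤ 2 * RC := by rwa [norm_sub_rev]
      have hqyx : kL * mL ≤ q y x :=
        le_trans (mul_le_mul_of_nonneg_left (hgLlb _ hnorm) hkL.le) (hqbd x y).1
      have hqxy : kL * mL ≤ q x y :=
        le_trans (mul_le_mul_of_nonneg_left (hgLlb _ hnorm') hkL.le) (hqbd y x).1
      have hb0 : 0 < q y x := hqpos x y
      have key : f y = min (q y x) (π y * q x y / π x) := by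
        rw [hfdef]
        simp only
        rw [min_mul_of_nonneg _ _ hb0.le, one_mul]
        congr 1
        rw [div_mul_eq_mul_div, mul_comm (π x) (q y x), ← div_div, mul_div_assoc,
          div_self hb0.ne', mul_one]
      rw [key]
      have hckm : c ≤ kL * mL := by
        rw [hcdef, div_le_iff₀ hπM]
        nlinarith [ha b hbC, mul_pos (mul_pos hkL hmL) hπm]
      refine le_min (le_trans hckm hqyx) ?_
      · rw [hcdef, div_le_div_iff₀ hπM (hpos x)]
        have h1 : π a ≤ π y := ha y hy
        have h2 : π x ≤ π b := hb x hx
        have h3 : kL * mL ≤ q x y := hqxy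
        have h4 : kL * mL * π a ≤ π y * q x y :=
          le_trans (mul_le_mul_of_nonneg_left h1 (mul_pos hkL hmL).le)
            (by rw [mul_comm (π y) (q x y)] at *;
                exact mul_le_mul_of_nonneg_right h3 (hpos y).le)
        have h5 : kL * mL * π a * π x ≤ (π y * q x y) * π b :=
          mul_le_mul h4 h2 (hpos x).le (mul_nonneg (hpos y).le (hqpos y x).le)
        linarith
    -- measure computation
    have hAC : volume (A ∩ C) < ⊤ :=
      lt_of_le_of_lt (measure_mono Set.inter_subset_right) hvolCfin
    have hνA : (((volC⁻¹ • volume.restrict C) A).toReal : ℝ)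
        = volC.toReal⁻¹ * (volume (A ∩ C)).toReal := by
      rw [Measure.smul_apply, Measure.restrict_apply hA, smul_eq_mul,
        ENNReal.toReal_mul, ENNReal.toReal_inv]
    rw [hνA]
    have hstep1 : c * volC.toReal * (volC.toReal⁻¹ * (volume (A ∩ C)).toReal)
        = c * (volume (A ∩ C)).toReal := by
      field_simp
    rw [hstep1]
    have hint1 : c * (volume (A ∩ C)).toReal ≤ ∫ y in A ∩ C, f y := by
      have hconst : ∫ y in A ∩ C, (c : ℝ) = (volume (A ∩ C)).toReal * c := by
        rw [setIntegral_const, smul_eq_mul]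
        rfl
      rw [mul_comm, ← hconst]
      exact setIntegral_mono_on (integrableOn_const hAC.ne)
        hfint.integrableOn (hA.inter hCmeas) (fun y hy => hflb y hy.2)
    have hint2 : (∫ y in A ∩ C, f y) ≤ ∫ y in A, f y :=
      setIntegral_mono_set hfint.integrableOn
        (Filter.Eventually.of_forall hf0)
        (HasSubset.Subset.eventuallyLE Set.inter_subset_left)
    have hrej : 0 ≤ (1 - ∫ y, f y) * Set.indicator A (fun _ => (1:ℝ)) x := by
      apply mul_nonneg
      · have : (∫ y, f y) ≤ ∫ y, q y x := integral_mono hfint hqxint hfq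
        rw [hqint x] at this
        linarith
      · exact Set.indicator_nonneg (fun _ _ => zero_le_one) x
    calc c * (volume (A ∩ C)).toReal ≤ ∫ y in A, f y := le_trans hint1 hint2
    _ ≤ (∫ y in A, f y) + (1 - ∫ y, f y) * Set.indicator A (fun _ => (1:ℝ)) x :=
        le_add_of_nonneg_right hrej
end
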